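/- arXiv:2503.23110 — 2 statements merged into one kernel-verified Lean document; each statement's English description precedes it below -/
import Mathlib

section
/- Let G₁ ≅ K_{1,4}, G₂ ≅ C₄ (the 4-cycle) and G₃ ≅ P₅ (the path on 5 vertices), each with its four edges labelled e₁₁, e₁₂, e₂₁, e₂₂ as described in the context, with vertex sets contained in the vertex set of G(n,m,p), n ≥ 8. For I ⊆ I₄ := {11,12,21,22}, let G_{i,I} be the subgraph of G_i induced by the edges e_{ab}, ab ∈ I, and let H_{i,I} be a graph on 8 vertices consisting of G_{i,I}, pairwise vertex-disjoint isolated edges e_{ab} for ab ∈ I₄\I (disjoint from G_{i,I}), and isolated vertices. Then the following identities hold: (1) ∫ ḡ₁(x)⁴ dμ_{m,p}(x) = Σ_{I⊆I₄} (−1)^{|I|} π(H_{1,I}); (2) ∫∫ ( ∫ ḡ₂(x,y₁) ḡ₂(x,y₂) dμ_{m,p}(x) )² dμ_{m,p}(y₁) dμ_{m,p}(y₂) = Σ_{I⊆I₄} (−1)^{|I|} π(H_{2,I}); (3) ∫ ( ∫ ḡ₁(x) ḡ₂(x,y) dμ_{m,p}(x) )² dμ_{m,p}(y) = Σ_{I⊆I₄}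 (−1)^{|I|} π(H_{3,I}), where π(H) := P(H ⊆ G(n,m,p)) and π(H_{i,∅}) is interpreted with G_{i,∅} empty. -/
open Finset MeasureTheory ProbabilityTheory Filter Topology

namespace RIG

noncomputable section

/-- `{0,1}^m`, the space of attribute vectors. -/
abbrev V (m : ℕ) : Type := Fin m → Bool

/-- The `Bernoulli(p)^{⊗ m}` weight of `x ∈ {0,1}^m`, i.e. `μ_{m,p}({x})`. -/
def bw (m : ℕ) (p : ℝ) (x : V m) : ℝ := ∏ i : Fin m, if x i then p else 1 - p

/-- The `μ_{m,p}^{⊗ k}` weight of a `k`-tuple of attribute vectors. -/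
def bwk (m k : ℕ) (p : ℝ) (x : Fin k → V m) : ℝ := ∏ j : Fin k, bw m p (x j)

/-- Integral with respect to `μ_{m,p}^{⊗ k}`. -/
def intk (m k : ℕ) (p : ℝ) (F : (Fin k → V m) → ℝ) : ℝ :=
  ∑ x : Fin k → V m, bwk m k p x * F x

/-- Squared `L²(μ_{m,p}^{⊗ k})` norm. -/
def normSq (m k : ℕ) (p : ℝ) (F : (Fin k → V m) → ℝ) : ℝ :=
  intk m k p fun x => F x ^ 2

/-- The underlying probability space of `G(n,m,p)`: each of the `n` vertices
chooses an attribute vector in `{0,1}^m`. -/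
abbrev Om (n m : ℕ) : Type := Fin n → V m

/-- Probability weight of a sample point `ω`. -/
def Wt (n m : ℕ) (p : ℝ) (ω : Om n m) : ℝ := ∏ k : Fin n, bw m p (ω k)

/-- Expectation of a random variable on `Om n m`. -/
def EE (n m : ℕ) (p : ℝ) (F : Om n m → ℝ) : ℝ := ∑ ω : Om n m, Wt n m p ω * F ω

/-- Variance of a random variable on `Om n m`. -/
def VarE (n m : ℕ) (p : ℝ) (F : Om n m → ℝ) : ℝ :=
  EE n m p fun ω => (F ω - EE n m p F) ^ 2

/-- Probability of an event. -/
def Pr (n m : ℕ) (p : ℝ) (s : Set (Om n m)) : ℝ :=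
  ∑ ω : Om n m, Set.indicator s (Wt n m p) ω

/-- Standardisation of a random variable. -/
def std (n m : ℕ) (p : ℝ) (F : Om n m → ℝ) (ω : Om n m) : ℝ :=
  (F ω - EE n m p F) / Real.sqrt (VarE n m p F)

/-- The standard normal CDF. -/
def Phi (t : ℝ) : ℝ := (gaussianReal 0 1 (Set.Iic t)).toReal

/-- Kolmogorov distance between (the law of) `F` and the standard normal. -/
def dK (n m : ℕ) (p : ℝ) (F : Om n m → ℝ) : ℝ :=
  ⨆ t : ℝ, |Pr n m p {ω | F ω ≤ t} - Phi t|

/-- Wasserstein distance between (the law of) `F` and the standard normal. -/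
def dW (n m : ℕ) (p : ℝ) (F : Om n m → ℝ) : ℝ :=
  ⨆ h : {h : ℝ → ℝ // LipschitzWith 1 h},
    |EE n m p (fun ω => h.1 (F ω)) - ∫ x, h.1 x ∂(gaussianReal 0 1)|

/-- `d_{K/W}`: the maximum of the Kolmogorov and Wasserstein distances. -/
def dKW (n m : ℕ) (p : ℝ) (F : Om n m → ℝ) : ℝ := max (dK n m p F) (dW n m p F)

/-- The edge probability `p̂ = 1 - (1-p²)^m`. -/
def phat (m : ℕ) (p : ℝ) : ℝ := 1 - (1 - p ^ 2) ^ m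

/-- The number of edges of `G(n,m,p)`: two vertices are adjacent iff they share
a chosen attribute. -/
def NE (n m : ℕ) (ω : Om n m) : ℝ :=
  ∑ k : Fin n, ∑ l : Fin n,
    if k < l ∧ ∃ a : Fin m, ω k a ∧ ω l a then 1 else 0


/-- Assemble `k` variables from three blocks: the first `a` from `w`, the next
`b - a` from `x` and the last `k - b` from `y`. -/
def asm3 {m : ℕ} (a b k : ℕ) (w : Fin a → V m) (x : Fin (b - a) → V m)
    (y : Fin (k - b) → V m) : Fin k → V m := fun i =>
  if h1 : (i : ℕ) < a then w ⟨i, h1⟩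
  else if h2 : (i : ℕ) < b then x ⟨(i : ℕ) - a, by omega⟩
  else y ⟨(i : ℕ) - b, by have := i.isLt; omega⟩

/-- The contraction `f *_b^a g` of `f : (V m)^k → ℝ` and `g : (V m)^l → ℝ`:
the first `a` variables are shared and integrated out, the next `b - a`
variables are shared, and the remaining variable blocks are separate. -/
def contract (m : ℕ) (p : ℝ) (k l a b : ℕ)
    (f : (Fin k → V m) → ℝ) (g : (Fin l → V m) → ℝ)
    (x : Fin (b - a) → V m) (y : Fin (k - b) → V m) (z : Fin (l - b) → V m) : ℝ :=
  ∑ w : Fin a → V m, bwk m a p w * (f (asm3 a b k w x y) * g (asm3 a b l w x z))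

/-- Squared `L²` norm `‖f *_b^a g‖₂²` of a contraction. -/
def contractNormSq (m : ℕ) (p : ℝ) (k l a b : ℕ)
    (f : (Fin k → V m) → ℝ) (g : (Fin l → V m) → ℝ) : ℝ :=
  ∑ x : Fin (b - a) → V m, ∑ y : Fin (k - b) → V m, ∑ z : Fin (l - b) → V m,
    bwk m (b - a) p x * bwk m (k - b) p y * bwk m (l - b) p z *
      contract m p k l a b f g x y z ^ 2

/-- `L²` norm `‖f *_b^a g‖₂` of a contraction. -/
def contractNorm (m : ℕ) (p : ℝ) (k l a b : ℕ)
    (f : (Fin k → V m) → ℝ) (g : (Fin l → V m) → ℝ) : ℝ :=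
  Real.sqrt (contractNormSq m p k l a b f g)

/-- `h_j`: integrating out the last `r - j` variables of `h`. -/
def marg (m r j : ℕ) (p : ℝ) (h : (Fin r → V m) → ℝ) (x : Fin j → V m) : ℝ :=
  ∑ y : Fin (r - j) → V m, bwk m (r - j) p y *
    h fun i =>
      if hi : (i : ℕ) < j then x ⟨i, hi⟩
      else y ⟨(i : ℕ) - j, by have := i.isLt; omega⟩

/-- The centralization `f̄ = f - ∫ f dμ^{⊗k}`. -/
def center (m k : ℕ) (p : ℝ) (f : (Fin k → V m) → ℝ) : (Fin k → V m) → ℝ :=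
  fun x => f x - intk m k p f

/-- `Φ_{x_i} f`: centralization of `f` in the `i`-th coordinate. -/
def phiC (m k : ℕ) (p : ℝ) (i : Fin k) (f : (Fin k → V m) → ℝ) :
    (Fin k → V m) → ℝ :=
  fun x => f x - ∑ t : V m, bw m p t * f (Function.update x i t)

/-- The coordinate-wise centralization `f̈ = Φ_{x₁} ⋯ Φ_{x_k} f`. -/
def ddot (m k : ℕ) (p : ℝ) (f : (Fin k → V m) → ℝ) : (Fin k → V m) → ℝ :=
  (List.finRange k).foldr (phiC m k p) f

/-- The U-statistic `X = ∑_{1 ≤ k₁ < … < k_r ≤ n} h(A^{(k₁)}, …, A^{(k_r)})`. -/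
def Ustat (n m r : ℕ) (h : (Fin r → V m) → ℝ) (ω : Om n m) : ℝ :=
  ∑ s : {s : Finset (Fin n) // s.card = r}, h fun i => ω (s.1.orderEmbOfFin s.2 i)


/-- The attribute `a` *builds* the set `C ⊆ V(H)` (where `S = V(H)`): all
vertices of `C` chose `a` and no other vertex of `S` chose `a`. -/
def Builds (n m : ℕ) (ω : Om n m) (a : Fin m) (S C : Finset (Fin n)) : Prop :=
  (∀ v ∈ C, ω v a = true) ∧ ∀ v ∈ S, v ∉ C → ω v a = false

/-- `𝒫(H)`: the family of subsets of `S = V(H)` containing both endpoints of at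
least one edge of `H` (edges given by the family `E` of `2`-element sets). -/
def Pcal (n : ℕ) (S : Finset (Fin n)) (E : Finset (Finset (Fin n))) :
    Finset (Finset (Fin n)) :=
  S.powerset.filter fun C => ∃ e ∈ E, e ⊆ C

/-- `𝒞` is a clique cover of the graph `H = (S, E)`. -/
def IsCliqueCover (n : ℕ) (S : Finset (Fin n)) (E : Finset (Finset (Fin n)))
    (𝒞 : Finset (Finset (Fin n))) : Prop :=
  𝒞 ⊆ Pcal n S E ∧ ∀ e ∈ E, ∃ C ∈ 𝒞, e ⊆ C

/-- `H = (S, E)` is *given by* the clique cover `𝒞` in `G(n,m,p)`: every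
`C ∈ 𝒞` is built by some attribute and no member of `𝒫(H) \ 𝒞` is built by
any attribute. -/
def GivenBy (n m : ℕ) (ω : Om n m) (S : Finset (Fin n))
    (E : Finset (Finset (Fin n))) (𝒞 : Finset (Finset (Fin n))) : Prop :=
  (∀ C ∈ 𝒞, ∃ a : Fin m, Builds n m ω a S C) ∧
    ∀ C ∈ Pcal n S E, C ∉ 𝒞 → ∀ a : Fin m, ¬Builds n m ω a S C

/-- `π(H, 𝒞)`: probability that `H` is given by precisely the clique cover `𝒞`. -/
def piCC (n m : ℕ) (p : ℝ) (S : Finset (Fin n)) (E : Finset (Finset (Fin n)))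
    (𝒞 : Finset (Finset (Fin n))) : ℝ :=
  Pr n m p {ω | GivenBy n m ω S E 𝒞}

/-- `π(H, 𝒞₊, 𝒞₋)`: probability that `H` is given by some clique cover `𝒞`
with `𝒞₊ ⊆ 𝒞 ⊆ 𝒫(H) \ 𝒞₋`. -/
def piPM (n m : ℕ) (p : ℝ) (S : Finset (Fin n)) (E : Finset (Finset (Fin n)))
    (Cp Cm : Finset (Finset (Fin n))) : ℝ :=
  Pr n m p {ω | ∃ 𝒞 : Finset (Finset (Fin n)),
    Cp ⊆ 𝒞 ∧ 𝒞 ⊆ Pcal n S E \ Cm ∧ IsCliqueCover n S E 𝒞 ∧ GivenBy n m ω S E 𝒞}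

/-- `p_C = p^{|C|} (1-p)^{|V(H)| - |C|}`. -/
def pC (n : ℕ) (p : ℝ) (S C : Finset (Fin n)) : ℝ :=
  p ^ C.card * (1 - p) ^ (S.card - C.card)

open Classical in
/-- The family `𝒦(F,G)` of all clique covers `𝒞` of `F ∪ G` with
`E(G) ⊆ 𝒞 ⊆ 𝒫(F ∪ G) \ E(F)`. -/
def Kfam (n : ℕ) (S : Finset (Fin n)) (EF EG : Finset (Finset (Fin n))) :
    Finset (Finset (Finset (Fin n))) :=
  (Pcal n S (EF ∪ EG)).powerset.filter fun 𝒞 =>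
    IsCliqueCover n S (EF ∪ EG) 𝒞 ∧ EG ⊆ 𝒞 ∧ Disjoint 𝒞 EF


/-- The edge kernel `g(x,y) = 1` iff `x` and `y` share a common attribute. -/
def gfun (m : ℕ) (x y : V m) : ℝ := if ∃ i : Fin m, x i ∧ y i then 1 else 0

/-- `g₁(x) = ∫ g(x,y) dμ_{m,p}(y)`. -/
def g1 (m : ℕ) (p : ℝ) (x : V m) : ℝ := ∑ y : V m, bw m p y * gfun m x y

/-- `ḡ₁ = g₁ - p̂`. -/
def gbar1 (m : ℕ) (p : ℝ) (x : V m) : ℝ := g1 m p x - phat m p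

/-- `ḡ₂(x,y) = g(x,y) - p̂`. -/
def gbar2 (m : ℕ) (p : ℝ) (x y : V m) : ℝ := gfun m x y - phat m p

/-- `ρ = 1 - g`. -/
def rho (m : ℕ) (x y : V m) : ℝ := 1 - gfun m x y

/-- `ρ₁(x) = ∫ ρ(x,y) dμ_{m,p}(y)`. -/
def rho1 (m : ℕ) (p : ℝ) (x : V m) : ℝ := ∑ y : V m, bw m p y * rho m x y

/-- The probability that all the (ordered-pair) edges in `Ed` are present in
`G(n,m,p)`, i.e. `P(H ⊆ G(n,m,p))` for the graph `H` with edge set `Ed`. -/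
def piSub (n m : ℕ) (p : ℝ) (Ed : Finset (Fin n × Fin n)) : ℝ :=
  Pr n m p {ω | ∀ e ∈ Ed, ∃ a : Fin m, ω e.1 a ∧ ω e.2 a}

/-- The set of vertices used by the edge set `Ed`. -/
def supp (n : ℕ) (Ed : Finset (Fin n × Fin n)) : Finset (Fin n) :=
  Ed.image Prod.fst ∪ Ed.image Prod.snd

/-- Edge pattern of `G₁ ≅ K_{1,4}` on `8` labels: edge `k` joins the centre `0`
with the leaf `k+1`. -/
def edg1 (k : Fin 4) : Fin 8 × Fin 8 := (0, ⟨(k : ℕ) + 1, by omega⟩)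

/-- Edge pattern of `G₂ ≅ C₄` on `8` labels: edge `k = (a,b)` joins `v_a = a`
with `u_b = 2 + b`, where `a = k / 2` and `b = k % 2`. -/
def edg2 (k : Fin 4) : Fin 8 × Fin 8 :=
  (⟨(k : ℕ) / 2, by omega⟩, ⟨2 + (k : ℕ) % 2, by omega⟩)

/-- Edge pattern of `G₃ ≅ P₅` (path `z₁–x₁–y–x₂–z₂` with `y = 0`, `x₁ = 1`,
`x₂ = 2`, `z₁ = 3`, `z₂ = 4`): edges `e₁₁ = {x₁,y}`, `e₁₂ = {x₁,z₁}`,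
`e₂₁ = {x₂,y}`, `e₂₂ = {x₂,z₂}`. -/
def edg3 : Fin 4 → Fin 8 × Fin 8 := ![(1, 0), (1, 3), (2, 0), (2, 4)]

/-- The edges of `G_{i,I}` inside `Fin n`, via the injection `v`. -/
def bedg (n : ℕ) (v : Fin 8 → Fin n) (edg : Fin 4 → Fin 8 × Fin 8)
    (I : Finset (Fin 4)) : Finset (Fin n × Fin n) :=
  I.image fun k => (v (edg k).1, v (edg k).2)

/-- The edges of `H_{i,I}`: the edges of `G_{i,I}` together with the isolated
edges `iso I k`, `k ∉ I`. -/
def Hset (n : ℕ) (v : Fin 8 → Fin n) (edg : Fin 4 → Fin 8 × Fin 8)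
    (iso : Finset (Fin 4) → Fin 4 → Fin n × Fin n) (I : Finset (Fin 4)) :
    Finset (Fin n × Fin n) :=
  bedg n v edg I ∪ Iᶜ.image (iso I)

/-- For every `I`, the isolated edges `iso I k`, `k ∉ I`, are proper edges,
pairwise vertex-disjoint, vertex-disjoint from `G_{i,I}`, and the resulting
graph `H_{i,I}` lives on (at most) `8` vertices. -/
def GoodIso (n : ℕ) (v : Fin 8 → Fin n) (edg : Fin 4 → Fin 8 × Fin 8)
    (iso : Finset (Fin 4) → Fin 4 → Fin n × Fin n) : Prop :=
  ∀ I : Finset (Fin 4),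
    (∀ k ∉ I, (iso I k).1 ≠ (iso I k).2 ∧
      (iso I k).1 ∉ supp n (bedg n v edg I) ∧
      (iso I k).2 ∉ supp n (bedg n v edg I)) ∧
    (∀ k ∉ I, ∀ k' ∉ I, k ≠ k' →
      Disjoint ({(iso I k).1, (iso I k).2} : Finset (Fin n))
        {(iso I k').1, (iso I k').2}) ∧
    (supp n (Hset n v edg iso I)).card ≤ 8




/-! ### Auxiliary lemmas -/

section Aux

variable {m n : ℕ} {p : ℝ}

lemma sum_pi_prod {ι κ : Type*} [Fintype ι] [DecidableEq ι] [Fintype κ] (f : ι → κ → ℝ) :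
    ∑ x : ι → κ, ∏ i, f i (x i) = ∏ i, ∑ y : κ, f i y := by
  rw [Finset.prod_univ_sum]; rfl

lemma sum_bw_eq_one : ∑ x : V m, bw m p x = 1 := by
  have := sum_pi_prod (fun (_ : Fin m) (b : Bool) => if b then p else 1 - p)
  simp only [bw]; rw [this]; simp

lemma sum_pi_bw_prod {ι : Type*} [Fintype ι] [DecidableEq ι] (f : ι → V m → ℝ) :
    ∑ x : ι → V m, (∏ i, bw m p (x i)) * ∏ i, f i (x i)
      = ∏ i, ∑ y : V m, bw m p y * f i y := by
  rw [← sum_pi_prod (fun i y => bw m p y * f i y)]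
  exact Finset.sum_congr rfl fun x _ => (Finset.prod_mul_distrib).symm

lemma sum_pi_bw_eq_one {ι : Type*} [Fintype ι] [DecidableEq ι] :
    ∑ x : ι → V m, (∏ i, bw m p (x i)) = 1 := by
  have := sum_pi_bw_prod (m := m) (p := p) (fun (_ : ι) (_ : V m) => 1)
  simpa [sum_bw_eq_one] using this

lemma wt_split (P : Fin n → Prop) [DecidablePred P] (a : {i // P i} → V m)
    (b : {i // ¬ P i} → V m) :
    Wt n m p ((Equiv.piEquivPiSubtypeProd P (fun _ : Fin n => V m)).symm (a, b))
      = (∏ i : {i // P i}, bw m p (a i)) * ∏ i : {i // ¬ P i}, bw m p (b i) := by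
  rw [Wt, ← Fintype.prod_subtype_mul_prod_subtype P
    (fun k => bw m p ((Equiv.piEquivPiSubtypeProd P (fun _ : Fin n => V m)).symm (a,b) k))]
  congr 1
  · exact Finset.prod_congr rfl fun i _ => by simp [Equiv.piEquivPiSubtypeProd, i.2]
  · exact Finset.prod_congr rfl fun i _ => by simp [Equiv.piEquivPiSubtypeProd, i.2]

lemma splitE (P : Fin n → Prop) [DecidablePred P] (F G : Om n m → ℝ)
    (hF : ∀ ω ω' : Om n m, (∀ i, P i → ω i = ω' i) → F ω = F ω')
    (hG : ∀ ω ω' : Om n m, (∀ i, ¬ P i → ω i = ω' i) → G ω = G ω') :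
    (∑ ω : Om n m, Wt n m p ω * (F ω * G ω))
      = (∑ ω : Om n m, Wt n m p ω * F ω) * (∑ ω : Om n m, Wt n m p ω * G ω) := by
  classical
  set e := (Equiv.piEquivPiSubtypeProd P (fun _ : Fin n => V m)).symm with he
  set b₀ : {i // ¬ P i} → V m := fun _ _ => false with hb₀
  set a₀ : {i // P i} → V m := fun _ _ => false with ha₀
  have keyF : ∀ (a : {i // P i} → V m) (b : {i // ¬ P i} → V m),
      F (e (a, b)) = F (e (a, b₀)) := by
    intro a b
    apply hF
    intro i hi
    simp [he, Equiv.piEquivPiSubtypeProd, hi]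
  have keyG : ∀ (a : {i // P i} → V m) (b : {i // ¬ P i} → V m),
      G (e (a, b)) = G (e (a₀, b)) := by
    intro a b
    apply hG
    intro i hi
    simp [he, Equiv.piEquivPiSubtypeProd, hi]
  have expand : ∀ H : Om n m → ℝ, ∑ ω : Om n m, Wt n m p ω * H ω
      = ∑ a : {i // P i} → V m, ∑ b : {i // ¬ P i} → V m,
        ((∏ i, bw m p (a i)) * ∏ i, bw m p (b i)) * H (e (a, b)) := by
    intro H
    rw [← Equiv.sum_comp e (fun ω => Wt n m p ω * H ω), Fintype.sum_prod_type]
    exact Finset.sum_congr rfl fun a _ => Finset.sum_congr rfl fun b _ => by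
      rw [wt_split]
  rw [expand, expand, expand]
  have l1 : ∑ a : {i // P i} → V m, ∑ b : {i // ¬ P i} → V m,
      ((∏ i, bw m p (a i)) * ∏ i, bw m p (b i)) * (F (e (a,b)) * G (e (a,b)))
      = (∑ a : {i // P i} → V m, (∏ i, bw m p (a i)) * F (e (a, b₀)))
        * (∑ b : {i // ¬ P i} → V m, (∏ i, bw m p (b i)) * G (e (a₀, b))) := by
    rw [Finset.sum_mul_sum]
    exact Finset.sum_congr rfl fun a _ => Finset.sum_congr rfl fun b _ => by
      rw [keyF a b, keyG a b]; ring
  rw [l1]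
  congr 1
  · refine (Finset.sum_congr rfl fun a _ => ?_).symm
    have h : ∀ b : {i // ¬ P i} → V m,
        ((∏ i, bw m p (a i)) * ∏ i, bw m p (b i)) * F (e (a, b))
        = ((∏ i, bw m p (a i)) * F (e (a, b₀))) * ∏ i, bw m p (b i) := by
      intro b; rw [keyF a b]; ring
    simp only [h]
    rw [← Finset.mul_sum, sum_pi_bw_eq_one, mul_one]
  · rw [Finset.sum_comm]
    refine (Finset.sum_congr rfl fun b _ => ?_).symm
    have h : ∀ a : {i // P i} → V m,
        ((∏ i, bw m p (a i)) * ∏ i, bw m p (b i)) * G (e (a, b))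
        = ((∏ i, bw m p (b i)) * G (e (a₀, b))) * ∏ i, bw m p (a i) := by
      intro a; rw [keyG a b]; ring
    simp only [h]
    rw [← Finset.mul_sum, sum_pi_bw_eq_one, mul_one]

lemma expandP (P : Fin n → Prop) [DecidablePred P] (H : Om n m → ℝ) :
    ∑ ω : Om n m, Wt n m p ω * H ω
      = ∑ a : {i // P i} → V m, ∑ b : {i // ¬ P i} → V m,
        ((∏ i, bw m p (a i)) * ∏ i, bw m p (b i))
          * H ((Equiv.piEquivPiSubtypeProd P (fun _ : Fin n => V m)).symm (a, b)) := by
  rw [← Equiv.sum_comp (Equiv.piEquivPiSubtypeProd P (fun _ : Fin n => V m)).symm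
    (fun ω => Wt n m p ω * H ω), Fintype.sum_prod_type]
  exact Finset.sum_congr rfl fun a _ => Finset.sum_congr rfl fun b _ => by rw [wt_split]

lemma pullP {k : ℕ} (P : Fin n → Prop) [DecidablePred P] (e' : Fin k ≃ {i // P i})
    (F : (Fin k → V m) → ℝ) :
    ∑ ω : Om n m, Wt n m p ω * F (fun j => ω (e' j : Fin n))
      = ∑ x : Fin k → V m, bwk m k p x * F x := by
  rw [expandP P]
  have key : ∀ (a : {i // P i} → V m) (b : {i // ¬ P i} → V m) (j : Fin k),
      (Equiv.piEquivPiSubtypeProd P (fun _ : Fin n => V m)).symm (a, b) (e' j : Fin n)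
        = a (e' j) := by
    intro a b j
    have hp : P (e' j : Fin n) := (e' j).2
    simp [Equiv.piEquivPiSubtypeProd, hp]
  have step1 : ∀ a : {i // P i} → V m,
      ∑ b : {i // ¬ P i} → V m,
        ((∏ i, bw m p (a i)) * ∏ i, bw m p (b i))
          * F (fun j => (Equiv.piEquivPiSubtypeProd P (fun _ : Fin n => V m)).symm
              (a, b) (e' j : Fin n))
      = (∏ i, bw m p (a i)) * F (fun j => a (e' j)) := by
    intro a
    have h : ∀ b : {i // ¬ P i} → V m,
        ((∏ i, bw m p (a i)) * ∏ i, bw m p (b i))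
          * F (fun j => (Equiv.piEquivPiSubtypeProd P (fun _ : Fin n => V m)).symm
              (a, b) (e' j : Fin n))
        = ((∏ i, bw m p (a i)) * F (fun j => a (e' j))) * ∏ i, bw m p (b i) := by
      intro b
      simp only [key a b]
      ring
    simp only [h]
    rw [← Finset.mul_sum, sum_pi_bw_eq_one, mul_one]
  refine Eq.trans (Finset.sum_congr rfl fun a _ => step1 a) ?_
  rw [← Equiv.sum_comp (Equiv.arrowCongr e' (Equiv.refl (V m)))
    (fun a => (∏ i, bw m p (a i)) * F (fun j => a (e' j)))]
  refine Finset.sum_congr rfl fun x _ => ?_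
  have h1 : ∀ i : {i // P i}, (Equiv.arrowCongr e' (Equiv.refl (V m))) x i = x (e'.symm i) := by
    intro i; simp
  simp only [h1, Equiv.symm_apply_apply]
  rw [Equiv.prod_comp e'.symm (fun j => bw m p (x j))]
  rfl

lemma pull {k : ℕ} (v : Fin k → Fin n) (hv : Function.Injective v)
    (F : (Fin k → V m) → ℝ) :
    ∑ ω : Om n m, Wt n m p ω * F (fun j => ω (v j))
      = ∑ x : Fin k → V m, bwk m k p x * F x := by
  classical
  have := pullP (m := m) (p := p) (fun i => i ∈ Set.range v) (Equiv.ofInjective v hv) F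
  simpa using this

lemma piSub_eq_sum (Ed : Finset (Fin n × Fin n)) :
    piSub n m p Ed = ∑ ω : Om n m, Wt n m p ω * ∏ e ∈ Ed, gfun m (ω e.1) (ω e.2) := by
  classical
  rw [piSub, Pr]
  refine Finset.sum_congr rfl fun ω _ => ?_
  by_cases h : ω ∈ {ω : Om n m | ∀ e ∈ Ed, ∃ a : Fin m, ω e.1 a ∧ ω e.2 a}
  · rw [Set.indicator_of_mem h]
    have h1 : ∏ e ∈ Ed, gfun m (ω e.1) (ω e.2) = 1 :=
      Finset.prod_eq_one fun e he => by rw [gfun, if_pos (h e he)]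
    rw [h1, mul_one]
  · rw [Set.indicator_of_notMem h]
    simp only [Set.mem_setOf_eq] at h
    push_neg at h
    obtain ⟨e, he, hne⟩ := h
    rw [Finset.prod_eq_zero he, mul_zero]
    rw [gfun, if_neg]
    intro hc
    obtain ⟨a, ha1, ha2⟩ := hc
    exact hne a ha1 ha2

lemma gsum : ∑ x : V m, bw m p x * ∑ y : V m, bw m p y * gfun m x y = phat m p := by
  classical
  have hg : ∀ x y : V m, gfun m x y
      = 1 - ∏ i : Fin m, (if x i ∧ y i then (0:ℝ) else 1) := by
    intro x y
    by_cases h : ∃ i : Fin m, x i ∧ y i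
    · obtain ⟨i, hi⟩ := h
      rw [gfun, if_pos ⟨i, hi⟩,
        Finset.prod_eq_zero (Finset.mem_univ i)
          (show (if x i ∧ y i then (0:ℝ) else 1) = 0 from if_pos hi)]
      norm_num
    · rw [gfun, if_neg h, Finset.prod_eq_one, sub_self]
      intro i _
      rw [if_neg]
      intro hc
      exact h ⟨i, hc⟩
  have key : ∑ x : V m, ∑ y : V m, (bw m p x * bw m p y)
      * ∏ i : Fin m, (if x i ∧ y i then (0:ℝ) else 1) = (1 - p ^ 2) ^ m := by
    refine Eq.trans (Fintype.sum_prod_type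
      (f := fun q : (Fin m → Bool) × (Fin m → Bool) => (bw m p q.1 * bw m p q.2)
        * ∏ i : Fin m, (if q.1 i ∧ q.2 i then (0:ℝ) else 1))).symm ?_
    refine Eq.trans (Equiv.sum_comp (Equiv.arrowProdEquivProdArrow (Fin m) (fun _ => Bool) (fun _ => Bool))
      (fun q : (Fin m → Bool) × (Fin m → Bool) => (bw m p q.1 * bw m p q.2)
        * ∏ i : Fin m, (if q.1 i ∧ q.2 i then (0:ℝ) else 1))).symm ?_
    have hterm : ∀ z : Fin m → Bool × Bool,
        (fun q : (Fin m → Bool) × (Fin m → Bool) => (bw m p q.1 * bw m p q.2)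
          * ∏ i : Fin m, (if q.1 i ∧ q.2 i then (0:ℝ) else 1))
          ((Equiv.arrowProdEquivProdArrow (Fin m) (fun _ => Bool) (fun _ => Bool)) z)
        = ∏ i : Fin m, ((if (z i).1 then p else 1 - p) * (if (z i).2 then p else 1 - p)
            * (if (z i).1 ∧ (z i).2 then (0:ℝ) else 1)) := by
      intro z
      simp only [Equiv.arrowProdEquivProdArrow, Equiv.coe_fn_mk, bw]
      rw [← Finset.prod_mul_distrib, ← Finset.prod_mul_distrib]
      congr
    rw [Finset.sum_congr rfl fun z _ => hterm z]
    refine Eq.trans (sum_pi_prod (fun (i : Fin m) (c : Bool × Bool) =>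
      (if c.1 then p else 1 - p) * (if c.2 then p else 1 - p)
        * (if c.1 ∧ c.2 then (0:ℝ) else 1))) ?_
    have hfac : ∀ _i : Fin m, ∑ c : Bool × Bool,
        ((if c.1 then p else 1 - p) * (if c.2 then p else 1 - p)
          * (if c.1 ∧ c.2 then (0:ℝ) else 1)) = 1 - p ^ 2 := by
      intro i
      rw [Fintype.sum_prod_type]
      simp
      ring
    rw [Finset.prod_congr rfl fun i _ => hfac i, Finset.prod_const, Finset.card_univ]
    simp
  have expand : ∑ x : V m, bw m p x * ∑ y : V m, bw m p y * gfun m x y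
      = ∑ x : V m, ∑ y : V m, (bw m p x * bw m p y)
        - ∑ x : V m, ∑ y : V m, (bw m p x * bw m p y)
          * ∏ i : Fin m, (if x i ∧ y i then (0:ℝ) else 1) := by
    rw [← Finset.sum_sub_distrib]
    refine Finset.sum_congr rfl fun x _ => ?_
    rw [Finset.mul_sum, ← Finset.sum_sub_distrib]
    refine Finset.sum_congr rfl fun y _ => ?_
    rw [hg x y]
    ring
  rw [expand, key]
  have h1 : ∑ x : V m, ∑ y : V m, (bw m p x * bw m p y) = 1 := by
    rw [← Finset.sum_mul_sum]
    rw [sum_bw_eq_one, mul_one]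
  rw [h1, phat]

lemma mem_supp_fst {Ed : Finset (Fin n × Fin n)} {e : Fin n × Fin n} (he : e ∈ Ed) :
    e.1 ∈ supp n Ed :=
  Finset.mem_union_left _ (Finset.mem_image_of_mem _ he)

lemma mem_supp_snd {Ed : Finset (Fin n × Fin n)} {e : Fin n × Fin n} (he : e ∈ Ed) :
    e.2 ∈ supp n Ed :=
  Finset.mem_union_right _ (Finset.mem_image_of_mem _ he)

lemma piSub_single (a b : Fin n) (hab : a ≠ b) :
    piSub n m p {(a, b)} = phat m p := by
  have hv : Function.Injective (![a, b] : Fin 2 → Fin n) := by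
    intro i j hij
    fin_cases i <;> fin_cases j <;> simp_all
  rw [piSub_eq_sum]
  simp only [Finset.prod_singleton]
  refine Eq.trans (pull (m := m) (p := p) (![a, b] : Fin 2 → Fin n) hv
    (fun x => gfun m (x 0) (x 1))) ?_
  refine Eq.trans (Equiv.sum_comp (piFinTwoEquiv (fun _ : Fin 2 => V m)).symm
    (fun x : Fin 2 → V m => bwk m 2 p x * gfun m (x 0) (x 1))).symm ?_
  refine Eq.trans (Fintype.sum_prod_type
    (f := fun q : V m × V m => bwk m 2 p ((piFinTwoEquiv (fun _ : Fin 2 => V m)).symm q)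
      * gfun m ((piFinTwoEquiv (fun _ : Fin 2 => V m)).symm q 0)
        ((piFinTwoEquiv (fun _ : Fin 2 => V m)).symm q 1))) ?_
  rw [← gsum (m := m) (p := p)]
  refine Finset.sum_congr rfl fun x _ => ?_
  rw [Finset.mul_sum]
  refine Finset.sum_congr rfl fun y _ => ?_
  have h2 : bwk m 2 p ((piFinTwoEquiv (fun _ : Fin 2 => V m)).symm (x, y))
      = bw m p x * bw m p y := by
    rw [bwk, Fin.prod_univ_two]
    rfl
  rw [h2]
  show bw m p x * bw m p y * gfun m x y = bw m p x * (bw m p y * gfun m x y)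
  ring

lemma piSub_insert (Ed : Finset (Fin n × Fin n)) (a b : Fin n) (hab : a ≠ b)
    (ha : a ∉ supp n Ed) (hb : b ∉ supp n Ed) :
    piSub n m p (insert (a, b) Ed) = phat m p * piSub n m p Ed := by
  classical
  have hnot : (a, b) ∉ Ed := fun h => ha (mem_supp_fst h)
  rw [piSub_eq_sum]
  simp only [Finset.prod_insert hnot]
  refine Eq.trans (splitE (fun i => i = a ∨ i = b) (fun ω => gfun m (ω a) (ω b))
    (fun ω => ∏ e ∈ Ed, gfun m (ω e.1) (ω e.2)) ?_ ?_) ?_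
  · intro ω ω' hagree
    show gfun m (ω a) (ω b) = gfun m (ω' a) (ω' b)
    rw [hagree a (Or.inl rfl), hagree b (Or.inr rfl)]
  · intro ω ω' hagree
    show (∏ e ∈ Ed, gfun m (ω e.1) (ω e.2)) = ∏ e ∈ Ed, gfun m (ω' e.1) (ω' e.2)
    refine Finset.prod_congr rfl fun e he => ?_
    have h1 : ¬(e.1 = a ∨ e.1 = b) := by
      rintro (h | h)
      · exact ha (h ▸ mem_supp_fst he)
      · exact hb (h ▸ mem_supp_fst he)
    have h2 : ¬(e.2 = a ∨ e.2 = b) := by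
      rintro (h | h)
      · exact ha (h ▸ mem_supp_snd he)
      · exact hb (h ▸ mem_supp_snd he)
    rw [hagree e.1 h1, hagree e.2 h2]
  · congr 1
    · show ∑ ω : Om n m, Wt n m p ω * gfun m (ω a) (ω b) = phat m p
      rw [← piSub_single (m := m) (p := p) a b hab, piSub_eq_sum]
      simp only [Finset.prod_singleton]
    · exact (piSub_eq_sum Ed).symm

lemma supp_union (A B : Finset (Fin n × Fin n)) :
    supp n (A ∪ B) = supp n A ∪ supp n B := by
  ext x
  simp only [supp, Finset.image_union, Finset.mem_union]
  tauto

lemma piSub_union_image (Ed : Finset (Fin n × Fin n)) (f : Fin 4 → Fin n × Fin n)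
    (K : Finset (Fin 4))
    (h1 : ∀ k ∈ K, (f k).1 ≠ (f k).2 ∧ (f k).1 ∉ supp n Ed ∧ (f k).2 ∉ supp n Ed)
    (h2 : ∀ k ∈ K, ∀ k' ∈ K, k ≠ k' →
      Disjoint ({(f k).1, (f k).2} : Finset (Fin n)) {(f k').1, (f k').2}) :
    piSub n m p (Ed ∪ K.image f) = phat m p ^ K.card * piSub n m p Ed := by
  classical
  induction K using Finset.induction_on with
  | empty => simp
  | @insert k s hk ih =>
    have hins : Ed ∪ (insert k s).image f = insert (f k) (Ed ∪ s.image f) := by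
      rw [Finset.image_insert]
      ext e
      simp only [Finset.mem_union, Finset.mem_insert]
      tauto
    have hmemk : k ∈ insert k s := Finset.mem_insert_self k s
    have hfk := h1 k hmemk
    have hnotsupp : ∀ c : Fin n, (c = (f k).1 ∨ c = (f k).2)
        → c ∉ supp n (Ed ∪ s.image f) := by
      intro c hc hmem
      rw [supp_union] at hmem
      rcases Finset.mem_union.mp hmem with hm | hm
      · rcases hc with h | h
        · exact hfk.2.1 (h ▸ hm)
        · exact hfk.2.2 (h ▸ hm)
      · have hex : ∃ k' ∈ s, c = (f k').1 ∨ c = (f k').2 := by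
          simp only [supp, Finset.mem_union, Finset.mem_image] at hm
          rcases hm with ⟨e, ⟨k', hk', rfl⟩, rfl⟩ | ⟨e, ⟨k', hk', rfl⟩, rfl⟩
          · exact ⟨k', hk', Or.inl rfl⟩
          · exact ⟨k', hk', Or.inr rfl⟩
        obtain ⟨k', hk', hce⟩ := hex
        have hkk' : k ≠ k' := fun h => hk (h ▸ hk')
        have hdisj := h2 k hmemk k' (Finset.mem_insert_of_mem hk') hkk'
        have hc1 : c ∈ ({(f k).1, (f k).2} : Finset (Fin n)) := by
          rcases hc with h | h <;> simp [h]
        have hc2 : c ∈ ({(f k').1, (f k').2} : Finset (Fin n)) := by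
          rcases hce with h | h <;> simp [h]
        exact Finset.disjoint_left.mp hdisj hc1 hc2
    rw [hins, show (f k) = ((f k).1, (f k).2) from rfl]
    rw [piSub_insert (Ed ∪ s.image f) (f k).1 (f k).2 hfk.1
      (hnotsupp _ (Or.inl rfl)) (hnotsupp _ (Or.inr rfl))]
    rw [ih (fun k' hk' => h1 k' (Finset.mem_insert_of_mem hk'))
      (fun k' hk' k'' hk'' => h2 k' (Finset.mem_insert_of_mem hk')
        k'' (Finset.mem_insert_of_mem hk''))]
    rw [Finset.card_insert_of_notMem hk, pow_succ]
    ring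

lemma piSub_bedg (v : Fin 8 → Fin n) (hv : Function.Injective v)
    (edg : Fin 4 → Fin 8 × Fin 8) (hedg : Function.Injective edg)
    (I : Finset (Fin 4)) :
    piSub n m p (bedg n v edg I)
      = ∑ x : Fin 8 → V m, bwk m 8 p x
        * ∏ k ∈ I, gfun m (x (edg k).1) (x (edg k).2) := by
  classical
  rw [piSub_eq_sum, bedg]
  have hinj : Set.InjOn (fun k => (v (edg k).1, v (edg k).2)) I := by
    intro k _ k' _ h
    simp only [Prod.mk.injEq] at h
    exact hedg (Prod.ext (hv h.1) (hv h.2))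
  rw [Finset.sum_congr rfl fun ω _ => by rw [Finset.prod_image hinj]]
  exact pull v hv (fun x => ∏ k ∈ I, gfun m (x (edg k).1) (x (edg k).2))

lemma sign_helper (c : ℕ) (hc : c ≤ 4) : ((-1 : ℝ)) ^ (4 - c) = (-1 : ℝ) ^ c := by
  interval_cases c <;> norm_num

lemma master (v : Fin 8 → Fin n) (hv : Function.Injective v)
    (edg : Fin 4 → Fin 8 × Fin 8) (hedg : Function.Injective edg)
    (iso : Finset (Fin 4) → Fin 4 → Fin n × Fin n) (hiso : GoodIso n v edg iso) :
    ∑ x : Fin 8 → V m, bwk m 8 p x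
        * ∏ k : Fin 4, (gfun m (x (edg k).1) (x (edg k).2) - phat m p)
      = ∑ I ∈ (Finset.univ : Finset (Fin 4)).powerset,
          (-1 : ℝ) ^ I.card * piSub n m p (Hset n v edg iso I) := by
  classical
  have hRHS : ∀ I : Finset (Fin 4),
      piSub n m p (Hset n v edg iso I)
        = phat m p ^ (4 - I.card)
          * ∑ x : Fin 8 → V m, bwk m 8 p x
            * ∏ k ∈ I, gfun m (x (edg k).1) (x (edg k).2) := by
    intro I
    have h := hiso I
    have hu := piSub_union_image (m := m) (p := p) (bedg n v edg I) (iso I) Iᶜ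
      (fun k hk => h.1 k (Finset.mem_compl.mp hk))
      (fun k hk k' hk' => h.2.1 k (Finset.mem_compl.mp hk) k' (Finset.mem_compl.mp hk'))
    rw [Hset, hu, Finset.card_compl]
    simp only [Fintype.card_fin]
    rw [piSub_bedg v hv edg hedg]
  have hLHS : ∀ x : Fin 8 → V m,
      ∏ k : Fin 4, (gfun m (x (edg k).1) (x (edg k).2) - phat m p)
        = ∑ I ∈ (Finset.univ : Finset (Fin 4)).powerset,
            (∏ k ∈ I, gfun m (x (edg k).1) (x (edg k).2))
              * (- phat m p) ^ (4 - I.card) := by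
    intro x
    have hpa := Finset.prod_add (fun k : Fin 4 => gfun m (x (edg k).1) (x (edg k).2))
      (fun _ : Fin 4 => - phat m p) Finset.univ
    simp only [sub_eq_add_neg]
    rw [hpa]
    refine Finset.sum_congr rfl fun I hI => ?_
    rw [Finset.prod_const, Finset.card_sdiff_of_subset (Finset.subset_univ I)]
    simp
  rw [Finset.sum_congr rfl fun x _ => by rw [hLHS x, Finset.mul_sum]]
  rw [Finset.sum_comm]
  refine Finset.sum_congr rfl fun I hI => ?_
  have hc : I.card ≤ 4 := by
    have := Finset.card_le_univ I
    simpa using this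
  rw [hRHS I]
  have hstep : ∑ x : Fin 8 → V m, bwk m 8 p x
      * ((∏ k ∈ I, gfun m (x (edg k).1) (x (edg k).2)) * (- phat m p) ^ (4 - I.card))
      = (- phat m p) ^ (4 - I.card)
        * ∑ x : Fin 8 → V m, bwk m 8 p x * ∏ k ∈ I, gfun m (x (edg k).1) (x (edg k).2) := by
    rw [Finset.mul_sum]
    exact Finset.sum_congr rfl fun x _ => by ring
  rw [hstep, neg_pow, sign_helper I.card hc]
  ring

lemma nest {k : ℕ} (G : (Fin (k+1) → V m) → ℝ) :
    ∑ x : Fin (k+1) → V m, bwk m (k+1) p x * G x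
      = ∑ a : V m, bw m p a * ∑ t : Fin k → V m, bwk m k p t * G (Fin.cons a t) := by
  rw [← Equiv.sum_comp (Fin.consEquiv (fun _ : Fin (k+1) => V m))
    (fun x => bwk m (k+1) p x * G x), Fintype.sum_prod_type]
  refine Finset.sum_congr rfl fun a _ => ?_
  rw [Finset.mul_sum]
  refine Finset.sum_congr rfl fun t _ => ?_
  have h1 : (Fin.consEquiv (fun _ : Fin (k+1) => V m)) (a, t) = Fin.cons a t := rfl
  have h2 : bwk m (k+1) p (Fin.cons a t) = bw m p a * bwk m k p t := by
    rw [bwk, bwk, Fin.prod_univ_succ]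
    simp
  rw [h1, h2]
  ring

lemma gbar1_sum (a : V m) : gbar1 m p a = ∑ y : V m, bw m p y * gbar2 m p a y := by
  have h : ∀ y : V m, bw m p y * gbar2 m p a y
      = bw m p y * gfun m a y - bw m p y * phat m p := by
    intro y; rw [gbar2]; ring
  rw [Finset.sum_congr rfl fun y _ => h y, Finset.sum_sub_distrib,
    ← Finset.sum_mul, sum_bw_eq_one, one_mul, gbar1, g1]

lemma sum_bw_one : ∑ y : V m, bw m p y * (1:ℝ) = 1 := by
  simp only [mul_one]; exact sum_bw_eq_one

lemma sq_expand {α : Type*} [Fintype α] (g : α → ℝ) :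
    (∑ x : α, g x) ^ 2 = ∑ x1 : α, ∑ x2 : α, g x1 * g x2 := by
  rw [sq, Finset.sum_mul_sum]

lemma sum4_swap {α : Type*} [Fintype α] (f : α → α → α → α → ℝ) :
    ∑ a : α, ∑ b : α, ∑ c : α, ∑ d : α, f a b c d
      = ∑ c : α, ∑ d : α, ∑ a : α, ∑ b : α, f a b c d := by
  calc ∑ a : α, ∑ b : α, ∑ c : α, ∑ d : α, f a b c d
      = ∑ a : α, ∑ c : α, ∑ b : α, ∑ d : α, f a b c d :=
        Finset.sum_congr rfl fun a _ => Finset.sum_comm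
    _ = ∑ c : α, ∑ a : α, ∑ b : α, ∑ d : α, f a b c d := Finset.sum_comm
    _ = ∑ c : α, ∑ a : α, ∑ d : α, ∑ b : α, f a b c d :=
        Finset.sum_congr rfl fun c _ => Finset.sum_congr rfl fun a _ => Finset.sum_comm
    _ = ∑ c : α, ∑ d : α, ∑ a : α, ∑ b : α, f a b c d :=
        Finset.sum_congr rfl fun c _ => Finset.sum_comm

end Aux

section Reductions

variable {m : ℕ} {p : ℝ}

lemma red1 :
    ∑ x : Fin 8 → V m, bwk m 8 p x
        * ∏ k : Fin 4, (gfun m (x (edg1 k).1) (x (edg1 k).2) - phat m p)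
      = ∑ x : V m, bw m p x * gbar1 m p x ^ 4 := by
  calc ∑ x : Fin 8 → V m, bwk m 8 p x
        * ∏ k : Fin 4, (gfun m (x (edg1 k).1) (x (edg1 k).2) - phat m p)
      = ∑ x : Fin 8 → V m, bwk m 8 p x
          * (gbar2 m p (x 0) (x 1) * gbar2 m p (x 0) (x 2) * gbar2 m p (x 0) (x 3)
            * gbar2 m p (x 0) (x 4)) := by
        refine Finset.sum_congr rfl fun x _ => ?_
        rw [Fin.prod_univ_four]
        rfl
    _ = ∑ a : V m, bw m p a * ∑ t : Fin 7 → V m, bwk m 7 p t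
          * (gbar2 m p a (t 0) * gbar2 m p a (t 1) * gbar2 m p a (t 2)
            * gbar2 m p a (t 3)) :=
        nest (k := 7) (fun x => gbar2 m p (x 0) (x 1) * gbar2 m p (x 0) (x 2)
          * gbar2 m p (x 0) (x 3) * gbar2 m p (x 0) (x 4))
    _ = ∑ a : V m, bw m p a * gbar1 m p a ^ 4 := by
        refine Finset.sum_congr rfl fun a _ => ?_
        congr 1
        have h1 : ∀ t : Fin 7 → V m, bwk m 7 p t
            * (gbar2 m p a (t 0) * gbar2 m p a (t 1) * gbar2 m p a (t 2)
              * gbar2 m p a (t 3))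
            = (∏ j, bw m p (t j)) * ∏ j : Fin 7,
              (![fun y => gbar2 m p a y, fun y => gbar2 m p a y, fun y => gbar2 m p a y,
                fun y => gbar2 m p a y, fun _ => (1:ℝ), fun _ => 1, fun _ => 1] j) (t j) := by
          intro t
          have hv : ∏ j : Fin 7,
              (![fun y => gbar2 m p a y, fun y => gbar2 m p a y, fun y => gbar2 m p a y,
                fun y => gbar2 m p a y, fun _ => (1:ℝ), fun _ => 1, fun _ => 1] j) (t j)
              = gbar2 m p a (t 0) * gbar2 m p a (t 1) * gbar2 m p a (t 2)
                * gbar2 m p a (t 3) * 1 * 1 * 1 := Fin.prod_univ_seven _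
          rw [hv]
          show (∏ j, bw m p (t j))
              * (gbar2 m p a (t 0) * gbar2 m p a (t 1) * gbar2 m p a (t 2)
                * gbar2 m p a (t 3))
            = (∏ j, bw m p (t j))
              * (gbar2 m p a (t 0) * gbar2 m p a (t 1) * gbar2 m p a (t 2)
                * gbar2 m p a (t 3) * 1 * 1 * 1)
          ring
        rw [Finset.sum_congr rfl fun t _ => h1 t, sum_pi_bw_prod, Fin.prod_univ_seven]
        show (∑ y : V m, bw m p y * gbar2 m p a y) * (∑ y : V m, bw m p y * gbar2 m p a y)
            * (∑ y : V m, bw m p y * gbar2 m p a y) * (∑ y : V m, bw m p y * gbar2 m p a y)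
            * (∑ y : V m, bw m p y * 1) * (∑ y : V m, bw m p y * 1)
            * (∑ y : V m, bw m p y * 1) = gbar1 m p a ^ 4
        rw [sum_bw_one, ← gbar1_sum a]
        ring

lemma red2 :
    ∑ x : Fin 8 → V m, bwk m 8 p x
        * ∏ k : Fin 4, (gfun m (x (edg2 k).1) (x (edg2 k).2) - phat m p)
      = ∑ y₁ : V m, ∑ y₂ : V m, bw m p y₁ * bw m p y₂
          * (∑ x : V m, bw m p x * gbar2 m p x y₁ * gbar2 m p x y₂) ^ 2 := by
  have inner : ∀ a b : V m,
      ∑ u : Fin 6 → V m, bwk m 6 p u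
        * (gbar2 m p a (u 0) * gbar2 m p a (u 1) * gbar2 m p b (u 0) * gbar2 m p b (u 1))
      = (∑ y : V m, bw m p y * (gbar2 m p a y * gbar2 m p b y)) ^ 2 := by
    intro a b
    have h1 : ∀ u : Fin 6 → V m, bwk m 6 p u
        * (gbar2 m p a (u 0) * gbar2 m p a (u 1) * gbar2 m p b (u 0) * gbar2 m p b (u 1))
        = (∏ j, bw m p (u j)) * ∏ j : Fin 6,
          (![fun y => gbar2 m p a y * gbar2 m p b y, fun y => gbar2 m p a y * gbar2 m p b y,
            fun _ => (1:ℝ), fun _ => 1, fun _ => 1, fun _ => 1] j) (u j) := by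
      intro u
      have hv : ∏ j : Fin 6,
          (![fun y => gbar2 m p a y * gbar2 m p b y, fun y => gbar2 m p a y * gbar2 m p b y,
            fun _ => (1:ℝ), fun _ => 1, fun _ => 1, fun _ => 1] j) (u j)
          = gbar2 m p a (u 0) * gbar2 m p b (u 0) * (gbar2 m p a (u 1) * gbar2 m p b (u 1))
            * 1 * 1 * 1 * 1 := by
        refine Eq.trans (Fin.prod_univ_six _) ?_
        show gbar2 m p a (u 0) * gbar2 m p b (u 0) * (gbar2 m p a (u 1) * gbar2 m p b (u 1))
            * 1 * 1 * 1 * 1 = _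
        rfl
      rw [hv]
      show (∏ j, bw m p (u j))
          * (gbar2 m p a (u 0) * gbar2 m p a (u 1) * gbar2 m p b (u 0) * gbar2 m p b (u 1))
        = (∏ j, bw m p (u j))
          * (gbar2 m p a (u 0) * gbar2 m p b (u 0) * (gbar2 m p a (u 1) * gbar2 m p b (u 1))
            * 1 * 1 * 1 * 1)
      ring
    rw [Finset.sum_congr rfl fun u _ => h1 u, sum_pi_bw_prod, Fin.prod_univ_six]
    show (∑ y : V m, bw m p y * (gbar2 m p a y * gbar2 m p b y))
        * (∑ y : V m, bw m p y * (gbar2 m p a y * gbar2 m p b y))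
        * (∑ y : V m, bw m p y * 1) * (∑ y : V m, bw m p y * 1)
        * (∑ y : V m, bw m p y * 1) * (∑ y : V m, bw m p y * 1)
      = (∑ y : V m, bw m p y * (gbar2 m p a y * gbar2 m p b y)) ^ 2
    rw [sum_bw_one]
    ring
  calc ∑ x : Fin 8 → V m, bwk m 8 p x
        * ∏ k : Fin 4, (gfun m (x (edg2 k).1) (x (edg2 k).2) - phat m p)
      = ∑ x : Fin 8 → V m, bwk m 8 p x
          * (gbar2 m p (x 0) (x 2) * gbar2 m p (x 0) (x 3) * gbar2 m p (x 1) (x 2)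
            * gbar2 m p (x 1) (x 3)) := by
        refine Finset.sum_congr rfl fun x _ => ?_
        rw [Fin.prod_univ_four]
        rfl
    _ = ∑ a : V m, bw m p a * ∑ t : Fin 7 → V m, bwk m 7 p t
          * (gbar2 m p a (t 1) * gbar2 m p a (t 2) * gbar2 m p (t 0) (t 1)
            * gbar2 m p (t 0) (t 2)) :=
        nest (k := 7) (fun x => gbar2 m p (x 0) (x 2) * gbar2 m p (x 0) (x 3)
          * gbar2 m p (x 1) (x 2) * gbar2 m p (x 1) (x 3))
    _ = ∑ a : V m, bw m p a * ∑ b : V m, bw m p b * ∑ u : Fin 6 → V m, bwk m 6 p u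
          * (gbar2 m p a (u 0) * gbar2 m p a (u 1) * gbar2 m p b (u 0)
            * gbar2 m p b (u 1)) := by
        refine Finset.sum_congr rfl fun a _ => ?_
        congr 1
        exact nest (k := 6) (fun t => gbar2 m p a (t 1) * gbar2 m p a (t 2)
          * gbar2 m p (t 0) (t 1) * gbar2 m p (t 0) (t 2))
    _ = ∑ a : V m, bw m p a * ∑ b : V m, bw m p b
          * (∑ y : V m, bw m p y * (gbar2 m p a y * gbar2 m p b y)) ^ 2 := by
        refine Finset.sum_congr rfl fun a _ => ?_
        congr 1
        refine Finset.sum_congr rfl fun b _ => ?_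
        rw [inner a b]
    _ = ∑ a : V m, ∑ b : V m, ∑ c : V m, ∑ d : V m,
          bw m p a * bw m p b * bw m p c * bw m p d
            * (gbar2 m p a c * gbar2 m p a d * gbar2 m p b c * gbar2 m p b d) := by
        refine Finset.sum_congr rfl fun a _ => ?_
        rw [Finset.mul_sum]
        refine Finset.sum_congr rfl fun b _ => ?_
        rw [sq_expand (g := fun y => bw m p y * (gbar2 m p a y * gbar2 m p b y))]
        simp only [Finset.mul_sum]
        refine Finset.sum_congr rfl fun c _ => Finset.sum_congr rfl fun d _ => ?_
        ring
    _ = ∑ c : V m, ∑ d : V m, ∑ a : V m, ∑ b : V m,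
          bw m p a * bw m p b * bw m p c * bw m p d
            * (gbar2 m p a c * gbar2 m p a d * gbar2 m p b c * gbar2 m p b d) :=
        sum4_swap _
    _ = ∑ y₁ : V m, ∑ y₂ : V m, bw m p y₁ * bw m p y₂
          * (∑ x : V m, bw m p x * gbar2 m p x y₁ * gbar2 m p x y₂) ^ 2 := by
        refine Finset.sum_congr rfl fun c _ => Finset.sum_congr rfl fun d _ => ?_
        rw [sq_expand (g := fun x => bw m p x * gbar2 m p x c * gbar2 m p x d)]
        simp only [Finset.mul_sum]
        refine (Finset.sum_congr rfl fun a _ => Finset.sum_congr rfl fun b _ => ?_).symm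
        ring

lemma red3 :
    ∑ x : Fin 8 → V m, bwk m 8 p x
        * ∏ k : Fin 4, (gfun m (x (edg3 k).1) (x (edg3 k).2) - phat m p)
      = ∑ y : V m, bw m p y
          * (∑ x : V m, bw m p x * gbar1 m p x * gbar2 m p x y) ^ 2 := by
  have inner3 : ∀ a b c : V m,
      ∑ w : Fin 5 → V m, bwk m 5 p w
        * (gbar2 m p b a * gbar2 m p b (w 0) * gbar2 m p c a * gbar2 m p c (w 1))
      = gbar2 m p b a * gbar1 m p b * (gbar2 m p c a * gbar1 m p c) := by
    intro a b c
    have h1 : ∀ w : Fin 5 → V m, bwk m 5 p w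
        * (gbar2 m p b a * gbar2 m p b (w 0) * gbar2 m p c a * gbar2 m p c (w 1))
        = (gbar2 m p b a * gbar2 m p c a) * ((∏ j, bw m p (w j)) * ∏ j : Fin 5,
          (![fun y => gbar2 m p b y, fun y => gbar2 m p c y,
            fun _ => (1:ℝ), fun _ => 1, fun _ => 1] j) (w j)) := by
      intro w
      have hv : ∏ j : Fin 5,
          (![fun y => gbar2 m p b y, fun y => gbar2 m p c y,
            fun _ => (1:ℝ), fun _ => 1, fun _ => 1] j) (w j)
          = gbar2 m p b (w 0) * gbar2 m p c (w 1) * 1 * 1 * 1 := Fin.prod_univ_five _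
      rw [hv]
      show (∏ j, bw m p (w j))
          * (gbar2 m p b a * gbar2 m p b (w 0) * gbar2 m p c a * gbar2 m p c (w 1))
        = (gbar2 m p b a * gbar2 m p c a) * ((∏ j, bw m p (w j))
          * (gbar2 m p b (w 0) * gbar2 m p c (w 1) * 1 * 1 * 1))
      ring
    rw [Finset.sum_congr rfl fun w _ => h1 w, ← Finset.mul_sum, sum_pi_bw_prod,
      Fin.prod_univ_five]
    show (gbar2 m p b a * gbar2 m p c a)
        * ((∑ y : V m, bw m p y * gbar2 m p b y) * (∑ y : V m, bw m p y * gbar2 m p c y)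
          * (∑ y : V m, bw m p y * 1) * (∑ y : V m, bw m p y * 1)
          * (∑ y : V m, bw m p y * 1))
      = gbar2 m p b a * gbar1 m p b * (gbar2 m p c a * gbar1 m p c)
    rw [sum_bw_one, ← gbar1_sum b, ← gbar1_sum c]
    ring
  calc ∑ x : Fin 8 → V m, bwk m 8 p x
        * ∏ k : Fin 4, (gfun m (x (edg3 k).1) (x (edg3 k).2) - phat m p)
      = ∑ x : Fin 8 → V m, bwk m 8 p x
          * (gbar2 m p (x 1) (x 0) * gbar2 m p (x 1) (x 3) * gbar2 m p (x 2) (x 0)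
            * gbar2 m p (x 2) (x 4)) := by
        refine Finset.sum_congr rfl fun x _ => ?_
        rw [Fin.prod_univ_four]
        rfl
    _ = ∑ a : V m, bw m p a * ∑ t : Fin 7 → V m, bwk m 7 p t
          * (gbar2 m p (t 0) a * gbar2 m p (t 0) (t 2) * gbar2 m p (t 1) a
            * gbar2 m p (t 1) (t 3)) :=
        nest (k := 7) (fun x => gbar2 m p (x 1) (x 0) * gbar2 m p (x 1) (x 3)
          * gbar2 m p (x 2) (x 0) * gbar2 m p (x 2) (x 4))
    _ = ∑ a : V m, bw m p a * ∑ b : V m, bw m p b * ∑ u : Fin 6 → V m, bwk m 6 p u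
          * (gbar2 m p b a * gbar2 m p b (u 1) * gbar2 m p (u 0) a
            * gbar2 m p (u 0) (u 2)) := by
        refine Finset.sum_congr rfl fun a _ => ?_
        congr 1
        exact nest (k := 6) (fun t => gbar2 m p (t 0) a * gbar2 m p (t 0) (t 2)
          * gbar2 m p (t 1) a * gbar2 m p (t 1) (t 3))
    _ = ∑ a : V m, bw m p a * ∑ b : V m, bw m p b * ∑ c : V m, bw m p c
          * ∑ w : Fin 5 → V m, bwk m 5 p w
            * (gbar2 m p b a * gbar2 m p b (w 0) * gbar2 m p c a
              * gbar2 m p c (w 1)) := by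
        refine Finset.sum_congr rfl fun a _ => ?_
        congr 1
        refine Finset.sum_congr rfl fun b _ => ?_
        congr 1
        exact nest (k := 5) (fun u => gbar2 m p b a * gbar2 m p b (u 1)
          * gbar2 m p (u 0) a * gbar2 m p (u 0) (u 2))
    _ = ∑ a : V m, bw m p a * ∑ b : V m, bw m p b * ∑ c : V m, bw m p c
          * (gbar2 m p b a * gbar1 m p b * (gbar2 m p c a * gbar1 m p c)) := by
        refine Finset.sum_congr rfl fun a _ => ?_
        congr 1
        refine Finset.sum_congr rfl fun b _ => ?_
        congr 1
        refine Finset.sum_congr rfl fun c _ => ?_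
        rw [inner3 a b c]
    _ = ∑ y : V m, bw m p y
          * (∑ x : V m, bw m p x * gbar1 m p x * gbar2 m p x y) ^ 2 := by
        refine Finset.sum_congr rfl fun a _ => ?_
        congr 1
        rw [sq_expand (g := fun x => bw m p x * gbar1 m p x * gbar2 m p x a)]
        simp only [Finset.mul_sum]
        refine Finset.sum_congr rfl fun b _ => Finset.sum_congr rfl fun c _ => ?_
        ring

end Reductions


/-- graphic representation of the three contraction integrals by
alternating sums of subgraph probabilities `π(H_{i,I})` (Lemma 6.2). -/
theorem stmt13 (n m : ℕ) (p : ℝ) (hn : 8 ≤ n) (hp0 : 0 < p) (hp1 : p < 1)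
    (v : Fin 8 → Fin n) (hv : Function.Injective v)
    (iso1 iso2 iso3 : Finset (Fin 4) → Fin 4 → Fin n × Fin n)
    (h1 : GoodIso n v edg1 iso1) (h2 : GoodIso n v edg2 iso2)
    (h3 : GoodIso n v edg3 iso3) :
    (∑ x : V m, bw m p x * gbar1 m p x ^ 4 =
        ∑ I ∈ (Finset.univ : Finset (Fin 4)).powerset,
          (-1 : ℝ) ^ I.card * piSub n m p (Hset n v edg1 iso1 I)) ∧
    (∑ y₁ : V m, ∑ y₂ : V m, bw m p y₁ * bw m p y₂ *
          (∑ x : V m, bw m p x * gbar2 m p x y₁ * gbar2 m p x y₂) ^ 2 =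
        ∑ I ∈ (Finset.univ : Finset (Fin 4)).powerset,
          (-1 : ℝ) ^ I.card * piSub n m p (Hset n v edg2 iso2 I)) ∧
    (∑ y : V m, bw m p y *
          (∑ x : V m, bw m p x * gbar1 m p x * gbar2 m p x y) ^ 2 =
        ∑ I ∈ (Finset.univ : Finset (Fin 4)).powerset,
          (-1 : ℝ) ^ I.card * piSub n m p (Hset n v edg3 iso3 I)) := by
  have he1 : Function.Injective edg1 := by decide
  have he2 : Function.Injective edg2 := by decide
  have he3 : Function.Injective edg3 := by decide
  refine ⟨?_, ?_, ?_⟩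
  · rw [← master v hv edg1 he1 iso1 h1]
    exact red1.symm
  · rw [← master v hv edg2 he2 iso2 h2]
    exact red2.symm
  · rw [← master v hv edg3 he3 iso3 h3]
    exact red3.symm

end

end RIG
end

section
/- There exists an absolute constant C > 0 such that for all n, m ≥ 3 and p ∈ (0,1), the number of edges N_E of G(n,m,p) satisfies: (i) n² · ∫∫ (g(x,y) − p̂)⁴ dμ_{m,p}(x) dμ_{m,p}(y) ≤ C (Var[N_E])² / (n² p̂(1−p̂)); (ii) n³ · ∫ ( ∫ (g(x,y) − p̂)² dμ_{m,p}(x) )² dμ_{m,p}(y) ≤ C (Var[N_E])² · ( 1/(n² p̂(1−p̂)) + 1/n ). -/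
open Finset MeasureTheory ProbabilityTheory Filter Topology

namespace RIG

noncomputable section

set_option maxHeartbeats 3200000

set_option linter.unusedSectionVars false
section PiSum
variable {α : Type*} [Fintype α] [DecidableEq α]

lemma sum_pi_succ {r : ℕ} (F : (Fin (r+1) → α) → ℝ) :
    ∑ x : Fin (r+1) → α, F x = ∑ a : α, ∑ x : Fin r → α, F (Fin.cons a x) := by
  rw [← Equiv.sum_comp (Fin.consEquiv (fun _ : Fin (r+1) => α)) F, Fintype.sum_prod_type]
  rfl

lemma sum_pi_prod_s14 : ∀ (r : ℕ) (f : Fin r → α → ℝ),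
    (∑ x : Fin r → α, ∏ i, f i (x i)) = ∏ i, ∑ t : α, f i t := by
  intro r
  induction r with
  | zero => intro f; simp
  | succ r ih =>
    intro f
    rw [sum_pi_succ, Fin.prod_univ_succ, ← ih fun i a => f i.succ a]
    simp only [Fin.prod_univ_succ, Fin.cons_zero, Fin.cons_succ]
    rw [Finset.sum_mul_sum]
end PiSum

lemma sum_bw (m : ℕ) (p : ℝ) : ∑ x : V m, bw m p x = 1 := by
  have h := sum_pi_prod_s14 (α := Bool) m (fun _ b => if b then p else 1 - p)
  have h2 : (∑ x : V m, bw m p x)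
      = ∑ x : V m, ∏ i, (fun (_ : Fin m) (b : Bool) => if b then p else 1 - p) i (x i) := rfl
  rw [h2, h]
  have : (∑ t : Bool, if t then p else 1 - p) = 1 := by
    rw [Fintype.sum_bool]; norm_num
  rw [this]; simp

lemma EE_local (n m : ℕ) (p : ℝ) (S : Finset (Fin n)) (c : Fin n → V m → ℝ) :
    (∑ ω : Om n m, Wt n m p ω * ∏ j ∈ S, c j (ω j))
      = ∏ j ∈ S, ∑ t : V m, bw m p t * c j t := by
  have key : ∀ ω : Om n m, Wt n m p ω * ∏ j ∈ S, c j (ω j)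
      = ∏ j, (fun (j : Fin n) (t : V m) => bw m p t * if j ∈ S then c j t else 1) j (ω j) := by
    intro ω
    simp only []
    rw [Finset.prod_mul_distrib, Finset.prod_ite_mem, Finset.univ_inter]
    rfl
  rw [Finset.sum_congr rfl fun ω _ => key ω,
    sum_pi_prod_s14 n (fun (j : Fin n) (t : V m) => bw m p t * if j ∈ S then c j t else 1)]
  have key2 : ∀ j : Fin n, (∑ t : V m, bw m p t * if j ∈ S then c j t else 1)
      = if j ∈ S then ∑ t : V m, bw m p t * c j t else 1 := by
    intro j
    by_cases hj : j ∈ S <;> simp [hj, sum_bw]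
  rw [Finset.prod_congr rfl fun j _ => key2 j, Finset.prod_ite_mem, Finset.univ_inter]

lemma EE_k (n m r : ℕ) (p : ℝ) (hr : r ≠ 0) (v : Fin r → Fin n) (hv : Function.Injective v)
    (f : (Fin r → V m) → ℝ) :
    EE n m p (fun ω => f (fun i => ω (v i)))
      = ∑ x : Fin r → V m, (∏ i, bw m p (x i)) * f x := by
  have : Nonempty (Fin r) := ⟨⟨0, Nat.pos_of_ne_zero hr⟩⟩
  set vinv := Function.invFun v with hvinvdef
  have hlv : ∀ i, vinv (v i) = i := fun i => Function.leftInverse_invFun hv i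
  have hdelta : ∀ ω : Om n m, f (fun i => ω (v i))
      = ∑ x : Fin r → V m, (∏ i, if ω (v i) = x i then (1:ℝ) else 0) * f x := by
    intro ω
    rw [Finset.sum_eq_single (fun i => ω (v i))]
    · simp
    · intro x _ hx
      obtain ⟨i, hi⟩ : ∃ i, ω (v i) ≠ x i := by
        by_contra hcon; push_neg at hcon
        exact hx (funext hcon).symm
      rw [Finset.prod_eq_zero (Finset.mem_univ i)
        (if_neg hi : (if ω (v i) = x i then (1:ℝ) else 0) = 0), zero_mul]
    · intro h; exact absurd (Finset.mem_univ _) h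
  unfold EE
  calc (∑ ω : Om n m, Wt n m p ω * f fun i => ω (v i))
      = ∑ ω : Om n m, ∑ x : Fin r → V m,
          (Wt n m p ω * ∏ i, if ω (v i) = x i then (1:ℝ) else 0) * f x := by
        refine Finset.sum_congr rfl fun ω _ => ?_
        rw [hdelta ω, Finset.mul_sum]
        exact Finset.sum_congr rfl fun x _ => by ring
    _ = ∑ x : Fin r → V m,
          (∑ ω : Om n m, Wt n m p ω * ∏ i, if ω (v i) = x i then (1:ℝ) else 0) * f x := by
        rw [Finset.sum_comm]
        exact Finset.sum_congr rfl fun x _ => by rw [Finset.sum_mul]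
    _ = ∑ x : Fin r → V m, (∏ i, bw m p (x i)) * f x := by
        refine Finset.sum_congr rfl fun x _ => ?_
        congr 1
        have himg : ∀ ω : Om n m, (∏ i, if ω (v i) = x i then (1:ℝ) else 0)
            = ∏ j ∈ Finset.image v Finset.univ,
                (fun (j : Fin n) (t : V m) => if t = x (vinv j) then (1:ℝ) else 0) j (ω j) := by
          intro ω
          rw [Finset.prod_image (fun a _ b _ h => hv h)]
          refine Finset.prod_congr rfl fun i _ => ?_
          simp only [hlv]
        rw [Finset.sum_congr rfl fun ω _ => by rw [himg ω],
          EE_local n m p (Finset.image v Finset.univ)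
            (fun (j : Fin n) (t : V m) => if t = x (vinv j) then (1:ℝ) else 0)]
        have : ∀ j : Fin n,
            (∑ t : V m, bw m p t * if t = x (vinv j) then (1:ℝ) else 0) = bw m p (x (vinv j)) := by
          intro j
          simp [mul_ite, Finset.sum_ite_eq']
        rw [Finset.prod_congr rfl fun j _ => this j, Finset.prod_image (fun a _ b _ h => hv h)]
        refine Finset.prod_congr rfl fun i _ => by rw [hlv]


section PiSum2
variable {α : Type*} [Fintype α] [DecidableEq α]

lemma sum_pi_zero (F : (Fin 0 → α) → ℝ) : ∑ x : Fin 0 → α, F x = F ![] := by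
  rw [Fintype.sum_unique]
  congr 1

lemma sum_pi_two (F : (Fin 2 → α) → ℝ) :
    ∑ x : Fin 2 → α, F x = ∑ a : α, ∑ b : α, F ![a, b] := by
  rw [sum_pi_succ]
  refine Finset.sum_congr rfl fun a _ => ?_
  rw [sum_pi_succ]
  refine Finset.sum_congr rfl fun b _ => ?_
  rw [sum_pi_zero (fun x => F (Fin.cons a (Fin.cons b x)))]
  rfl

lemma sum_pi_three (F : (Fin 3 → α) → ℝ) :
    ∑ x : Fin 3 → α, F x = ∑ a : α, ∑ b : α, ∑ c : α, F ![a, b, c] := by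
  rw [sum_pi_succ]
  refine Finset.sum_congr rfl fun a _ => ?_
  rw [sum_pi_two (fun x => F (Fin.cons a x))]
  rfl

lemma sum_pi_four (F : (Fin 4 → α) → ℝ) :
    ∑ x : Fin 4 → α, F x = ∑ a : α, ∑ b : α, ∑ c : α, ∑ d : α, F ![a, b, c, d] := by
  rw [sum_pi_succ]
  refine Finset.sum_congr rfl fun a _ => ?_
  rw [sum_pi_three (fun x => F (Fin.cons a x))]
  rfl

end PiSum2

lemma inj2 {n : ℕ} {k l : Fin n} (h : k ≠ l) : Function.Injective ![k, l] := by
  intro a b hab; fin_cases a <;> fin_cases b <;> simp_all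
lemma inj3 {n : ℕ} {k l j : Fin n} (h1 : k ≠ l) (h2 : k ≠ j) (h3 : l ≠ j) :
    Function.Injective ![k, l, j] := by
  intro a b hab; fin_cases a <;> fin_cases b <;> simp_all
lemma inj4 {n : ℕ} {k l j i : Fin n} (h1 : k ≠ l) (h2 : k ≠ j) (h3 : k ≠ i)
    (h4 : l ≠ j) (h5 : l ≠ i) (h6 : j ≠ i) : Function.Injective ![k, l, j, i] := by
  intro a b hab; fin_cases a <;> fin_cases b <;> simp_all

lemma EE_2 {n m : ℕ} {p : ℝ} {k l : Fin n} (h : k ≠ l) (f : V m → V m → ℝ) :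
    EE n m p (fun ω => f (ω k) (ω l))
      = ∑ u : V m, ∑ v : V m, bw m p u * bw m p v * f u v := by
  have e1 : EE n m p (fun ω => f (ω k) (ω l))
      = EE n m p (fun ω => (fun x : Fin 2 → V m => f (x 0) (x 1)) (fun i => ω (![k,l] i))) := by
    unfold EE; exact Finset.sum_congr rfl fun ω _ => by norm_num
  rw [e1, EE_k n m 2 p (by norm_num) ![k,l] (inj2 h)
    (fun x : Fin 2 → V m => f (x 0) (x 1)), sum_pi_two
    (fun x : Fin 2 → V m => (∏ i, bw m p (x i)) * f (x 0) (x 1))]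
  refine Finset.sum_congr rfl fun u _ => Finset.sum_congr rfl fun v _ => ?_
  rw [Fin.prod_univ_two]
  norm_num

lemma EE_3 {n m : ℕ} {p : ℝ} {k l j : Fin n} (h1 : k ≠ l) (h2 : k ≠ j) (h3 : l ≠ j)
    (f : V m → V m → V m → ℝ) :
    EE n m p (fun ω => f (ω k) (ω l) (ω j))
      = ∑ u : V m, ∑ v : V m, ∑ w : V m, bw m p u * bw m p v * bw m p w * f u v w := by
  have e1 : EE n m p (fun ω => f (ω k) (ω l) (ω j))
      = EE n m p (fun ω => (fun x : Fin 3 → V m => f (x 0) (x 1) (x 2)) (fun i => ω (![k,l,j] i))) := by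
    unfold EE; exact Finset.sum_congr rfl fun ω _ => by rfl
  rw [e1, EE_k n m 3 p (by norm_num) ![k,l,j] (inj3 h1 h2 h3)
    (fun x : Fin 3 → V m => f (x 0) (x 1) (x 2)), sum_pi_three
    (fun x : Fin 3 → V m => (∏ i, bw m p (x i)) * f (x 0) (x 1) (x 2))]
  refine Finset.sum_congr rfl fun u _ => Finset.sum_congr rfl fun v _ =>
    Finset.sum_congr rfl fun w _ => ?_
  rw [Fin.prod_univ_three]
  norm_num
  rfl

lemma EE_4 {n m : ℕ} {p : ℝ} {k l j i : Fin n} (h1 : k ≠ l) (h2 : k ≠ j) (h3 : k ≠ i)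
    (h4 : l ≠ j) (h5 : l ≠ i) (h6 : j ≠ i) (f : V m → V m → V m → V m → ℝ) :
    EE n m p (fun ω => f (ω k) (ω l) (ω j) (ω i))
      = ∑ u : V m, ∑ v : V m, ∑ w : V m, ∑ z : V m,
          bw m p u * bw m p v * bw m p w * bw m p z * f u v w z := by
  have e1 : EE n m p (fun ω => f (ω k) (ω l) (ω j) (ω i))
      = EE n m p (fun ω => (fun x : Fin 4 → V m => f (x 0) (x 1) (x 2) (x 3))
          (fun i' => ω (![k,l,j,i] i'))) := by
    unfold EE; exact Finset.sum_congr rfl fun ω _ => by rfl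
  rw [e1, EE_k n m 4 p (by norm_num) ![k,l,j,i] (inj4 h1 h2 h3 h4 h5 h6)
    (fun x : Fin 4 → V m => f (x 0) (x 1) (x 2) (x 3)), sum_pi_four
    (fun x : Fin 4 → V m => (∏ i', bw m p (x i')) * f (x 0) (x 1) (x 2) (x 3))]
  refine Finset.sum_congr rfl fun u _ => Finset.sum_congr rfl fun v _ =>
    Finset.sum_congr rfl fun w _ => Finset.sum_congr rfl fun z _ => ?_
  rw [Fin.prod_univ_four]
  norm_num
  rfl

lemma gfun_symm (m : ℕ) (x y : V m) : gfun m x y = gfun m y x := by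
  unfold gfun
  congr 1
  simp [and_comm]

lemma gfun_01 (m : ℕ) (x y : V m) : gfun m x y = 0 ∨ gfun m x y = 1 := by
  unfold gfun; split_ifs <;> simp

lemma one_sub_gfun (m : ℕ) (u v : V m) :
    1 - gfun m u v = ∏ i : Fin m, (if u i ∧ v i then (0:ℝ) else 1) := by
  unfold gfun
  by_cases h : ∃ i : Fin m, u i ∧ v i
  · obtain ⟨i, hi⟩ := h
    rw [if_pos ⟨i, hi⟩,
      Finset.prod_eq_zero (Finset.mem_univ i) (if_pos hi : (if u i ∧ v i then (0:ℝ) else 1) = 0)]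
    ring
  · rw [if_neg h, Finset.prod_eq_one fun i _ => if_neg (fun hc => h ⟨i, hc⟩)]
    ring

lemma pair_rho (m : ℕ) (p : ℝ) :
    ∑ u : V m, ∑ v : V m, bw m p u * bw m p v * (1 - gfun m u v) = (1 - p^2)^m := by
  have inner : ∀ u : V m, ∑ v : V m, bw m p v * (1 - gfun m u v)
      = ∏ i : Fin m, (if u i then 1 - p else 1) := by
    intro u
    have hpt : ∀ v : V m, bw m p v * (1 - gfun m u v)
        = ∏ i, (fun (i : Fin m) (b : Bool) =>
            (if b then p else 1 - p) * (if u i ∧ b then (0:ℝ) else 1)) i (v i) := by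
      intro v
      rw [one_sub_gfun]
      unfold bw
      rw [← Finset.prod_mul_distrib]
    rw [Finset.sum_congr rfl fun v _ => hpt v, sum_pi_prod_s14 m (fun (i : Fin m) (b : Bool) =>
      (if b then p else 1 - p) * (if u i ∧ b then (0:ℝ) else 1))]
    refine Finset.prod_congr rfl fun i _ => ?_
    rw [Fintype.sum_bool]
    by_cases h : u i = true <;> simp [h] <;> ring
  have outer : ∀ u : V m, bw m p u * ∏ i : Fin m, (if u i then 1 - p else 1)
      = ∏ i, (fun (i : Fin m) (b : Bool) =>
          (if b then p else 1 - p) * (if b then 1 - p else 1)) i (u i) := by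
    intro u
    unfold bw
    rw [← Finset.prod_mul_distrib]
  calc ∑ u : V m, ∑ v : V m, bw m p u * bw m p v * (1 - gfun m u v)
      = ∑ u : V m, bw m p u * ∑ v : V m, bw m p v * (1 - gfun m u v) := by
        refine Finset.sum_congr rfl fun u _ => ?_
        rw [Finset.mul_sum]
        exact Finset.sum_congr rfl fun v _ => by ring
    _ = ∑ u : V m, ∏ i, (fun (i : Fin m) (b : Bool) =>
          (if b then p else 1 - p) * (if b then 1 - p else 1)) i (u i) := by
        refine Finset.sum_congr rfl fun u _ => ?_
        rw [inner u, outer u]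
    _ = (1 - p^2)^m := by
        rw [sum_pi_prod_s14 m (fun (i : Fin m) (b : Bool) =>
          (if b then p else 1 - p) * (if b then 1 - p else 1))]
        rw [Finset.prod_congr rfl fun (i : Fin m) _ => (Fintype.sum_bool _)]
        rw [Finset.prod_const]
        norm_num
        ring_nf

lemma sum_bw_pair (m : ℕ) (p : ℝ) :
    ∑ u : V m, ∑ v : V m, bw m p u * bw m p v = 1 := by
  rw [Finset.sum_congr rfl fun (u : V m) _ => by rw [← Finset.mul_sum, sum_bw, mul_one], sum_bw]

lemma pair_int (m : ℕ) (p : ℝ) :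
    ∑ u : V m, ∑ v : V m, bw m p u * bw m p v * gfun m u v = phat m p := by
  have key : ∀ u v : V m, bw m p u * bw m p v * gfun m u v
      = bw m p u * bw m p v - bw m p u * bw m p v * (1 - gfun m u v) := by intro u v; ring
  rw [Finset.sum_congr rfl fun (u : V m) _ => Finset.sum_congr rfl fun (v : V m) _ => key u v]
  rw [Finset.sum_congr rfl fun (u : V m) _ => Finset.sum_sub_distrib _ _, Finset.sum_sub_distrib,
    sum_bw_pair, pair_rho]
  rfl

def qv (m : ℕ) (p : ℝ) (u : V m) : ℝ := ∑ v : V m, bw m p v * gfun m u v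
def Vq (m : ℕ) (p : ℝ) : ℝ := ∑ u : V m, bw m p u * (qv m p u - phat m p)^2

lemma q_int (m : ℕ) (p : ℝ) : ∑ u : V m, bw m p u * qv m p u = phat m p := by
  rw [← pair_int m p]
  refine Finset.sum_congr rfl fun u _ => ?_
  unfold qv
  rw [Finset.mul_sum]
  exact Finset.sum_congr rfl fun v _ => by ring

lemma qbar (m : ℕ) (p : ℝ) (u : V m) :
    ∑ v : V m, bw m p v * (gfun m u v - phat m p) = qv m p u - phat m p := by
  rw [Finset.sum_congr rfl fun (v : V m) _ => mul_sub (bw m p v) _ _, Finset.sum_sub_distrib,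
    ← Finset.sum_mul, sum_bw, one_mul]
  rfl

lemma Vq_expand (m : ℕ) (p : ℝ) :
    Vq m p = (∑ u : V m, bw m p u * qv m p u ^ 2) - phat m p ^ 2 := by
  unfold Vq
  have key : ∀ u : V m, bw m p u * (qv m p u - phat m p)^2
      = bw m p u * qv m p u ^2 - 2 * phat m p * (bw m p u * qv m p u)
        + phat m p ^2 * bw m p u := by intro u; ring
  rw [Finset.sum_congr rfl fun (u : V m) _ => key u, Finset.sum_add_distrib,
    Finset.sum_sub_distrib, ← Finset.mul_sum, ← Finset.mul_sum, q_int, sum_bw]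
  ring

lemma center_val (m : ℕ) (p : ℝ) :
    ∑ u : V m, ∑ v : V m, bw m p u * bw m p v * (gfun m u v - phat m p) = 0 := by
  have key : ∀ u v : V m, bw m p u * bw m p v * (gfun m u v - phat m p)
      = (1:ℝ) * (bw m p u * bw m p v * gfun m u v)
        + (-(phat m p)) * (bw m p u * bw m p v) := by intro u v; ring
  rw [Finset.sum_congr rfl fun (u : V m) _ => Finset.sum_congr rfl fun (v : V m) _ => key u v]
  rw [Finset.sum_congr rfl fun (u : V m) _ => Finset.sum_add_distrib, Finset.sum_add_distrib,
    Finset.sum_congr rfl fun (u : V m) _ => (Finset.mul_sum ..).symm,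
    Finset.sum_congr rfl fun (u : V m) _ => (Finset.mul_sum ..).symm]
  rw [← Finset.mul_sum, ← Finset.mul_sum, pair_int, sum_bw_pair]
  ring

lemma diag_val (m : ℕ) (p : ℝ) :
    ∑ u : V m, ∑ v : V m, bw m p u * bw m p v * ((gfun m u v - phat m p) * (gfun m u v - phat m p))
      = phat m p * (1 - phat m p) := by
  have key : ∀ u v : V m, bw m p u * bw m p v * ((gfun m u v - phat m p) * (gfun m u v - phat m p))
      = (1 - 2 * phat m p) * (bw m p u * bw m p v * gfun m u v)
        + phat m p ^2 * (bw m p u * bw m p v) := by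
    intro u v
    rcases gfun_01 m u v with h | h <;> rw [h] <;> ring
  rw [Finset.sum_congr rfl fun (u : V m) _ => Finset.sum_congr rfl fun (v : V m) _ => key u v]
  rw [Finset.sum_congr rfl fun (u : V m) _ => Finset.sum_add_distrib, Finset.sum_add_distrib,
    Finset.sum_congr rfl fun (u : V m) _ => (Finset.mul_sum ..).symm,
    Finset.sum_congr rfl fun (u : V m) _ => (Finset.mul_sum ..).symm]
  rw [← Finset.mul_sum, ← Finset.mul_sum, pair_int, sum_bw_pair]
  ring

lemma four_val (m : ℕ) (p : ℝ) :
    ∑ u : V m, ∑ v : V m, bw m p u * bw m p v * (gfun m u v - phat m p)^4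
      = phat m p * (1 - phat m p)^4 + phat m p ^4 * (1 - phat m p) := by
  have key : ∀ u v : V m, bw m p u * bw m p v * (gfun m u v - phat m p)^4
      = ((1 - phat m p)^4 - phat m p ^4) * (bw m p u * bw m p v * gfun m u v)
        + phat m p ^4 * (bw m p u * bw m p v) := by
    intro u v
    rcases gfun_01 m u v with h | h <;> rw [h] <;> ring
  rw [Finset.sum_congr rfl fun (u : V m) _ => Finset.sum_congr rfl fun (v : V m) _ => key u v]
  rw [Finset.sum_congr rfl fun (u : V m) _ => Finset.sum_add_distrib, Finset.sum_add_distrib,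
    Finset.sum_congr rfl fun (u : V m) _ => (Finset.mul_sum ..).symm,
    Finset.sum_congr rfl fun (u : V m) _ => (Finset.mul_sum ..).symm]
  rw [← Finset.mul_sum, ← Finset.mul_sum, pair_int, sum_bw_pair]
  ring

lemma tri_val (m : ℕ) (p : ℝ) :
    ∑ u : V m, ∑ v : V m, ∑ w : V m, bw m p u * bw m p v * bw m p w *
        ((gfun m u v - phat m p) * (gfun m u w - phat m p)) = Vq m p := by
  unfold Vq
  refine Finset.sum_congr rfl fun u _ => ?_
  calc ∑ v : V m, ∑ w : V m, bw m p u * bw m p v * bw m p w *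
          ((gfun m u v - phat m p) * (gfun m u w - phat m p))
      = ∑ v : V m, (bw m p u * (bw m p v * (gfun m u v - phat m p))) *
          ∑ w : V m, bw m p w * (gfun m u w - phat m p) := by
        refine Finset.sum_congr rfl fun v _ => ?_
        rw [Finset.mul_sum]
        exact Finset.sum_congr rfl fun w _ => by ring
    _ = bw m p u * (qv m p u - phat m p)^2 := by
        rw [Finset.sum_congr rfl fun (v : V m) _ => by rw [qbar m p u], ← Finset.sum_mul,
          ← Finset.mul_sum, qbar m p u]
        ring

lemma quad_val (m : ℕ) (p : ℝ) :
    ∑ u : V m, ∑ v : V m, ∑ w : V m, ∑ z : V m,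
        bw m p u * bw m p v * bw m p w * bw m p z *
          ((gfun m u v - phat m p) * (gfun m w z - phat m p)) = 0 := by
  have key : ∀ u v : V m, ∑ w : V m, ∑ z : V m,
      bw m p u * bw m p v * bw m p w * bw m p z *
        ((gfun m u v - phat m p) * (gfun m w z - phat m p)) = 0 := by
    intro u v
    have : ∀ w z : V m, bw m p u * bw m p v * bw m p w * bw m p z *
        ((gfun m u v - phat m p) * (gfun m w z - phat m p))
        = (bw m p u * bw m p v * (gfun m u v - phat m p)) *
            (bw m p w * bw m p z * (gfun m w z - phat m p)) := by intro w z; ring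
    rw [Finset.sum_congr rfl fun (w : V m) _ => Finset.sum_congr rfl fun (z : V m) _ => this w z]
    rw [Finset.sum_congr rfl fun (w : V m) _ => (Finset.mul_sum ..).symm, ← Finset.mul_sum,
      center_val]
    ring
  rw [Finset.sum_congr rfl fun (u : V m) _ => Finset.sum_congr rfl fun (v : V m) _ => key u v]
  simp

section EElevel
variable {n m : ℕ} {p : ℝ}

def cE (n m : ℕ) (p : ℝ) (e : Fin n × Fin n) (ω : Om n m) : ℝ :=
  if e.1 < e.2 then gfun m (ω e.1) (ω e.2) - phat m p else 0

def cov (n m : ℕ) (p : ℝ) (e f : Fin n × Fin n) : ℝ :=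
  EE n m p (fun ω => cE n m p e ω * cE n m p f ω)

lemma EE_congr {F G : Om n m → ℝ} (h : ∀ ω, F ω = G ω) : EE n m p F = EE n m p G := by
  unfold EE; exact Finset.sum_congr rfl fun ω _ => by rw [h ω]

lemma EE_sum {ι : Type*} (s : Finset ι) (F : ι → Om n m → ℝ) :
    EE n m p (fun ω => ∑ i ∈ s, F i ω) = ∑ i ∈ s, EE n m p (F i) := by
  unfold EE
  rw [Finset.sum_congr rfl fun (ω : Om n m) _ => Finset.mul_sum ..]
  exact Finset.sum_comm

lemma EE_zero : EE n m p (fun _ => 0) = 0 := by unfold EE; simp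

lemma NE_pointwise (ω : Om n m) : NE n m ω
    = ∑ e ∈ (Finset.univ ×ˢ Finset.univ : Finset (Fin n × Fin n)),
        (if e.1 < e.2 then gfun m (ω e.1) (ω e.2) else 0) := by
  rw [Finset.sum_product]
  unfold NE
  refine Finset.sum_congr rfl fun k _ => Finset.sum_congr rfl fun l _ => ?_
  by_cases h : k < l <;> simp [h, gfun]

lemma ENE : EE n m p (NE n m)
    = ∑ e ∈ (Finset.univ ×ˢ Finset.univ : Finset (Fin n × Fin n)),
        (if e.1 < e.2 then phat m p else 0) := by
  rw [EE_congr fun ω => NE_pointwise ω, EE_sum]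
  refine Finset.sum_congr rfl fun e _ => ?_
  by_cases h : e.1 < e.2
  · simp only [if_pos h]
    rw [EE_2 (ne_of_lt h) (fun u v => gfun m u v), pair_int]
  · simp only [if_neg h]
    exact EE_zero

lemma centered (ω : Om n m) : NE n m ω - EE n m p (NE n m)
    = ∑ e ∈ (Finset.univ ×ˢ Finset.univ : Finset (Fin n × Fin n)), cE n m p e ω := by
  rw [NE_pointwise ω, ENE, ← Finset.sum_sub_distrib]
  refine Finset.sum_congr rfl fun e _ => ?_
  unfold cE
  by_cases h : e.1 < e.2 <;> simp [h]

lemma Var_eq : VarE n m p (NE n m)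
    = ∑ e ∈ (Finset.univ ×ˢ Finset.univ : Finset (Fin n × Fin n)),
        ∑ f ∈ (Finset.univ ×ˢ Finset.univ : Finset (Fin n × Fin n)), cov n m p e f := by
  unfold VarE
  have key : ∀ ω : Om n m, (NE n m ω - EE n m p (NE n m))^2
      = ∑ e ∈ (Finset.univ ×ˢ Finset.univ : Finset (Fin n × Fin n)),
          ∑ f ∈ (Finset.univ ×ˢ Finset.univ : Finset (Fin n × Fin n)),
            cE n m p e ω * cE n m p f ω := by
    intro ω
    rw [sq, centered ω, Finset.sum_mul_sum]
  rw [EE_congr key, EE_sum]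
  exact Finset.sum_congr rfl fun e _ => EE_sum ..

lemma cov_not_left {e f : Fin n × Fin n} (h : ¬ e.1 < e.2) : cov n m p e f = 0 := by
  unfold cov
  rw [EE_congr (fun ω => by rw [show cE n m p e ω = 0 from if_neg h, zero_mul]), EE_zero]

lemma cov_not_right {e f : Fin n × Fin n} (h : ¬ f.1 < f.2) : cov n m p e f = 0 := by
  unfold cov
  rw [EE_congr (fun ω => by rw [show cE n m p f ω = 0 from if_neg h, mul_zero]), EE_zero]

lemma cov_diag {e : Fin n × Fin n} (h : e.1 < e.2) :
    cov n m p e e = phat m p * (1 - phat m p) := by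
  unfold cov
  rw [EE_congr (fun ω => by rw [show cE n m p e ω = gfun m (ω e.1) (ω e.2) - phat m p from if_pos h]),
    EE_2 (ne_of_lt h) (fun u v => (gfun m u v - phat m p) * (gfun m u v - phat m p)), diag_val]

lemma tri_EE {c x y : Fin n} (h1 : c ≠ x) (h2 : c ≠ y) (h3 : x ≠ y) :
    EE n m p (fun ω => (gfun m (ω c) (ω x) - phat m p) * (gfun m (ω c) (ω y) - phat m p))
      = Vq m p := by
  rw [EE_3 h1 h2 h3 (fun u v w => (gfun m u v - phat m p) * (gfun m u w - phat m p)), tri_val]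

lemma quad_EE {k l j i : Fin n} (h1 : k ≠ l) (h2 : k ≠ j) (h3 : k ≠ i)
    (h4 : l ≠ j) (h5 : l ≠ i) (h6 : j ≠ i) :
    EE n m p (fun ω => (gfun m (ω k) (ω l) - phat m p) * (gfun m (ω j) (ω i) - phat m p))
      = 0 := by
  rw [EE_4 h1 h2 h3 h4 h5 h6
    (fun u v w z => (gfun m u v - phat m p) * (gfun m w z - phat m p)), quad_val]

lemma cov_expand {k l k' l' : Fin n} (he : k < l) (hf : k' < l') :
    cov n m p (k, l) (k', l')
      = EE n m p (fun ω => (gfun m (ω k) (ω l) - phat m p)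
          * (gfun m (ω k') (ω l') - phat m p)) := by
  unfold cov
  exact EE_congr fun ω => by
    rw [show cE n m p (k, l) ω = gfun m (ω k) (ω l) - phat m p from if_pos he,
      show cE n m p (k', l') ω = gfun m (ω k') (ω l') - phat m p from if_pos hf]

lemma cov_tri {k l j : Fin n} (h1 : k < l) (h2 : k < j) (h3 : l ≠ j) :
    cov n m p (k, l) (k, j) = Vq m p := by
  rw [cov_expand h1 h2]
  exact tri_EE (ne_of_lt h1) (ne_of_lt h2) h3

lemma cov_nonneg (hp0 : 0 ≤ p) (hp1 : p ≤ 1) (hphat0 : 0 ≤ phat m p)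
    (hphat1 : phat m p ≤ 1) (hVq : 0 ≤ Vq m p) (e f : Fin n × Fin n) :
    0 ≤ cov n m p e f := by
  obtain ⟨k, l⟩ := e
  obtain ⟨k', l'⟩ := f
  by_cases he : k < l
  swap
  · rw [cov_not_left he]
  by_cases hf : k' < l'
  swap
  · rw [cov_not_right hf]
  by_cases h1 : k = k'
  · subst h1
    by_cases h2 : l = l'
    · subst h2
      rw [cov_diag he]
      nlinarith
    · rw [cov_tri he hf h2]
      exact hVq
  · by_cases h3 : k = l'
    · -- shared k = l' ; f = (k', k)
      subst h3
      have hkl' : k' ≠ l := ne_of_lt (lt_trans hf he)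
      rw [cov_expand he hf,
        EE_congr (fun ω => by rw [gfun_symm m (ω k') (ω k)] : ∀ ω : Om n m,
          (gfun m (ω k) (ω l) - phat m p) * (gfun m (ω k') (ω k) - phat m p)
            = (gfun m (ω k) (ω l) - phat m p) * (gfun m (ω k) (ω k') - phat m p))]
      rw [tri_EE (ne_of_lt he) h1 (fun hc => hkl' hc.symm)]
      exact hVq
    · by_cases h4 : l = k'
      · -- shared l = k'
        subst h4
        rw [cov_expand he hf,
          EE_congr (fun ω => by rw [gfun_symm m (ω k) (ω l)] : ∀ ω : Om n m,
            (gfun m (ω k) (ω l) - phat m p) * (gfun m (ω l) (ω l') - phat m p)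
              = (gfun m (ω l) (ω k) - phat m p) * (gfun m (ω l) (ω l') - phat m p))]
        rw [tri_EE (Ne.symm (ne_of_lt he)) (ne_of_lt hf) h3]
        exact hVq
      · by_cases h5 : l = l'
        · -- shared l = l'
          subst h5
          rw [cov_expand he hf,
            EE_congr (fun ω => by rw [gfun_symm m (ω k) (ω l), gfun_symm m (ω k') (ω l)] :
              ∀ ω : Om n m,
              (gfun m (ω k) (ω l) - phat m p) * (gfun m (ω k') (ω l) - phat m p)
                = (gfun m (ω l) (ω k) - phat m p) * (gfun m (ω l) (ω k') - phat m p))]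
          rw [tri_EE (Ne.symm (ne_of_lt he)) (Ne.symm (ne_of_lt hf)) h1]
          exact hVq
        · -- all distinct
          rw [cov_expand he hf,
            quad_EE (ne_of_lt he) h1 h3 h4 h5 (ne_of_lt hf)]

end EElevel

section Count
variable {n : ℕ}

lemma sum3_perm (G : Fin n → Fin n → Fin n → ℝ) :
    ∑ k : Fin n, ∑ l : Fin n, ∑ j : Fin n, G j l k
      = ∑ k : Fin n, ∑ l : Fin n, ∑ j : Fin n, G k l j := by
  calc ∑ k : Fin n, ∑ l : Fin n, ∑ j : Fin n, G j l k
      = ∑ k : Fin n, ∑ j : Fin n, ∑ l : Fin n, G j l k :=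
        Finset.sum_congr rfl fun k _ => Finset.sum_comm
    _ = ∑ j : Fin n, ∑ k : Fin n, ∑ l : Fin n, G j l k := Finset.sum_comm
    _ = ∑ j : Fin n, ∑ l : Fin n, ∑ k : Fin n, G j l k :=
        Finset.sum_congr rfl fun j _ => Finset.sum_comm

lemma sum3_swap12 (G : Fin n → Fin n → Fin n → ℝ) :
    ∑ k : Fin n, ∑ l : Fin n, ∑ j : Fin n, G l k j
      = ∑ k : Fin n, ∑ l : Fin n, ∑ j : Fin n, G k l j := Finset.sum_comm

lemma count2 (n : ℕ) : ∑ k : Fin n, ∑ l : Fin n, (if k < l then (1:ℝ) else 0)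
    = ((n:ℝ)^2 - n)/2 := by
  have tri_chi : ∀ k l : Fin n, (if k < l then (1:ℝ) else 0) + (if l < k then (1:ℝ) else 0)
      + (if k = l then (1:ℝ) else 0) = 1 := by
    intro k l
    rcases lt_trichotomy k l with h|h|h
    · rw [if_pos h, if_neg (asymm h), if_neg (ne_of_lt h)]; ring
    · subst h; simp
    · rw [if_pos h, if_neg (asymm h), if_neg (ne_of_gt h)]; ring
  have htotal : ∑ k : Fin n, ∑ l : Fin n, ((if k < l then (1:ℝ) else 0)
      + (if l < k then (1:ℝ) else 0) + (if k = l then (1:ℝ) else 0)) = (n:ℝ)^2 := by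
    rw [Finset.sum_congr rfl fun (k : Fin n) _ => Finset.sum_congr rfl fun (l : Fin n) _ =>
      tri_chi k l]
    simp [sq]
  have hswap : (∑ k : Fin n, ∑ l : Fin n, (if l < k then (1:ℝ) else 0))
      = ∑ k : Fin n, ∑ l : Fin n, (if k < l then (1:ℝ) else 0) := Finset.sum_comm
  have hdiag : (∑ k : Fin n, ∑ l : Fin n, (if k = l then (1:ℝ) else 0)) = n := by
    rw [Finset.sum_congr rfl fun (k : Fin n) _ => by
      rw [Finset.sum_ite_eq Finset.univ k (fun _ => (1:ℝ)), if_pos (Finset.mem_univ k)]]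
    simp
  rw [Finset.sum_congr rfl fun (k : Fin n) _ => Finset.sum_add_distrib,
    Finset.sum_add_distrib] at htotal
  rw [Finset.sum_congr rfl fun (k : Fin n) _ => Finset.sum_add_distrib,
    Finset.sum_add_distrib, hswap, hdiag] at htotal
  linarith

lemma chi_mul_zero {k l j : Fin n} (h : k ≠ l) :
    (if k = j then (1:ℝ) else 0) * (if l = j then (1:ℝ) else 0) = 0 := by
  by_cases h1 : k = j
  · rw [if_pos h1, if_neg (fun h2 => h (h1.trans h2.symm))]; ring
  · rw [if_neg h1]; ring

lemma sum_chi_two {k l : Fin n} (h : k ≠ l) :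
    ∑ j : Fin n, (if k = j then (0:ℝ) else 1) * (if l = j then (0:ℝ) else 1) = (n:ℝ) - 2 := by
  have key : ∀ j : Fin n, (if k = j then (0:ℝ) else 1) * (if l = j then (0:ℝ) else 1)
      = 1 - (if k = j then (1:ℝ) else 0) - (if l = j then (1:ℝ) else 0)
        + (if k = j then (1:ℝ) else 0) * (if l = j then (1:ℝ) else 0) := by
    intro j
    by_cases h1 : k = j <;> by_cases h2 : l = j <;> simp [h1, h2]
  rw [Finset.sum_congr rfl fun (j : Fin n) _ => by
    rw [key j, chi_mul_zero h, add_zero]]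
  rw [Finset.sum_sub_distrib, Finset.sum_sub_distrib,
    Finset.sum_ite_eq Finset.univ k (fun _ => (1:ℝ)), if_pos (Finset.mem_univ k),
    Finset.sum_ite_eq Finset.univ l (fun _ => (1:ℝ)), if_pos (Finset.mem_univ l)]
  simp
  ring

lemma countD (n : ℕ) : ∑ k : Fin n, ∑ l : Fin n, ∑ j : Fin n,
    ((if k = l then (0:ℝ) else 1) * (if k = j then (0:ℝ) else 1) * (if l = j then (0:ℝ) else 1))
      = (n:ℝ) * ((n:ℝ) - 1) * ((n:ℝ) - 2) := by
  have inner : ∀ k l : Fin n, ∑ j : Fin n,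
      ((if k = l then (0:ℝ) else 1) * (if k = j then (0:ℝ) else 1) * (if l = j then (0:ℝ) else 1))
        = (if k = l then (0:ℝ) else 1) * ((n:ℝ) - 2) := by
    intro k l
    by_cases hkl : k = l
    · simp [hkl]
    · rw [if_neg hkl]
      have hpt : ∀ j : Fin n, (1:ℝ) * (if k = j then (0:ℝ) else 1) * (if l = j then (0:ℝ) else 1)
          = (if k = j then (0:ℝ) else 1) * (if l = j then (0:ℝ) else 1) := fun j => by ring
      rw [Finset.sum_congr rfl fun (j : Fin n) _ => hpt j, sum_chi_two hkl, one_mul]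
  rw [Finset.sum_congr rfl fun (k : Fin n) _ => Finset.sum_congr rfl fun (l : Fin n) _ =>
    inner k l]
  have hne : ∀ k : Fin n, ∑ l : Fin n, (if k = l then (0:ℝ) else 1) = (n:ℝ) - 1 := by
    intro k
    have key : ∀ l : Fin n, (if k = l then (0:ℝ) else 1) = 1 - (if k = l then (1:ℝ) else 0) := by
      intro l; by_cases h : k = l <;> simp [h]
    rw [Finset.sum_congr rfl fun (l : Fin n) _ => key l, Finset.sum_sub_distrib,
      Finset.sum_ite_eq Finset.univ k (fun _ => (1:ℝ)), if_pos (Finset.mem_univ k)]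
    simp
  rw [Finset.sum_congr rfl fun (k : Fin n) _ => by
    rw [← Finset.sum_mul, hne k]]
  rw [← Finset.sum_mul]
  simp [Finset.sum_const, Finset.card_univ, nsmul_eq_mul]
  left; ring

set_option maxHeartbeats 3200000 in
lemma count3 (n : ℕ) : ∑ k : Fin n, ∑ l : Fin n, ∑ j : Fin n,
    ((if k < l then (1:ℝ) else 0) * (if k < j then (1:ℝ) else 0) * (if l = j then (0:ℝ) else 1))
      = (n:ℝ) * ((n:ℝ) - 1) * ((n:ℝ) - 2) / 3 := by
  set F : Fin n → Fin n → Fin n → ℝ := fun a b c =>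
    (if a < b then (1:ℝ) else 0) * (if a < c then (1:ℝ) else 0) * (if b = c then (0:ℝ) else 1)
    with hF
  have min_chi : ∀ k l j : Fin n, F k l j + F l k j + F j l k
      = (if k = l then (0:ℝ) else 1) * (if k = j then (0:ℝ) else 1)
        * (if l = j then (0:ℝ) else 1) := by
    intro k l j
    simp only [hF, Fin.lt_def, Fin.ext_iff]
    split_ifs <;> first | ring1 | (exfalso; omega)
  have key : (∑ k : Fin n, ∑ l : Fin n, ∑ j : Fin n, F k l j) * 3
      = (n:ℝ) * ((n:ℝ) - 1) * ((n:ℝ) - 2) := by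
    have hmin : ∑ k : Fin n, ∑ l : Fin n, ∑ j : Fin n, (F k l j + F l k j + F j l k)
        = (n:ℝ) * ((n:ℝ) - 1) * ((n:ℝ) - 2) := by
      rw [Finset.sum_congr rfl fun (k : Fin n) _ => Finset.sum_congr rfl fun (l : Fin n) _ =>
        Finset.sum_congr rfl fun (j : Fin n) _ => min_chi k l j]
      exact countD n
    simp only [Finset.sum_add_distrib] at hmin
    rw [sum3_swap12 F, sum3_perm F] at hmin
    linarith
  show (∑ k : Fin n, ∑ l : Fin n, ∑ j : Fin n, F k l j)
    = (n:ℝ) * ((n:ℝ) - 1) * ((n:ℝ) - 2) / 3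
  linarith
end Count

section VarBound
variable {n m : ℕ} {p : ℝ}

lemma bw_nonneg (hp0 : 0 ≤ p) (hp1 : p ≤ 1) (x : V m) : 0 ≤ bw m p x :=
  Finset.prod_nonneg fun i _ => by split_ifs <;> linarith

lemma Vq_nonneg (hp0 : 0 ≤ p) (hp1 : p ≤ 1) : 0 ≤ Vq m p :=
  Finset.sum_nonneg fun u _ => mul_nonneg (bw_nonneg hp0 hp1 u) (sq_nonneg _)

lemma var_ge_diag (hp0 : 0 ≤ p) (hp1 : p ≤ 1) (hphat0 : 0 ≤ phat m p)
    (hphat1 : phat m p ≤ 1) :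
    ((n:ℝ)^2 - n)/2 * (phat m p * (1 - phat m p)) ≤ VarE n m p (NE n m) := by
  have hVq := Vq_nonneg (m := m) hp0 hp1
  have hnn := cov_nonneg (n := n) hp0 hp1 hphat0 hphat1 hVq
  rw [Var_eq]
  have h2 : ∑ e ∈ (Finset.univ ×ˢ Finset.univ : Finset (Fin n × Fin n)), cov n m p e e
      ≤ ∑ e ∈ (Finset.univ ×ˢ Finset.univ : Finset (Fin n × Fin n)),
          ∑ f ∈ (Finset.univ ×ˢ Finset.univ : Finset (Fin n × Fin n)), cov n m p e f :=
    Finset.sum_le_sum fun e he => Finset.single_le_sum (fun f _ => hnn e f) he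
  have h3 : ∑ e ∈ (Finset.univ ×ˢ Finset.univ : Finset (Fin n × Fin n)), cov n m p e e
      = ((n:ℝ)^2 - n)/2 * (phat m p * (1 - phat m p)) := by
    rw [Finset.sum_product]
    have hpt : ∀ k l : Fin n, cov n m p (k, l) (k, l)
        = (if k < l then (1:ℝ) else 0) * (phat m p * (1 - phat m p)) := by
      intro k l
      by_cases h : k < l
      · rw [if_pos h, one_mul, cov_diag h]
      · rw [if_neg h, zero_mul, cov_not_left (e := (k,l)) h]
    rw [Finset.sum_congr rfl fun (k : Fin n) _ => Finset.sum_congr rfl fun (l : Fin n) _ =>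
      hpt k l]
    rw [Finset.sum_congr rfl fun (k : Fin n) _ => (Finset.sum_mul ..).symm, ← Finset.sum_mul,
      count2]
  linarith

lemma var_ge_tri (hp0 : 0 ≤ p) (hp1 : p ≤ 1) (hphat0 : 0 ≤ phat m p)
    (hphat1 : phat m p ≤ 1) :
    (n:ℝ) * ((n:ℝ) - 1) * ((n:ℝ) - 2) / 3 * Vq m p ≤ VarE n m p (NE n m) := by
  have hVq := Vq_nonneg (m := m) hp0 hp1
  have hnn := cov_nonneg (n := n) hp0 hp1 hphat0 hphat1 hVq
  rw [Var_eq, Finset.sum_product]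
  have step1 : ∀ k l : Fin n,
      ∑ j : Fin n, cov n m p (k, l) (k, j)
        ≤ ∑ f ∈ (Finset.univ ×ˢ Finset.univ : Finset (Fin n × Fin n)), cov n m p (k, l) f := by
    intro k l
    rw [Finset.sum_product]
    exact Finset.single_le_sum
      (fun k' _ => Finset.sum_nonneg fun l' _ => hnn (k, l) (k', l')) (Finset.mem_univ k)
  have step2 : ∀ k l j : Fin n,
      (if k < l then (1:ℝ) else 0) * (if k < j then (1:ℝ) else 0) * (if l = j then (0:ℝ) else 1)
          * Vq m p
        ≤ cov n m p (k, l) (k, j) := by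
    intro k l j
    by_cases h1 : k < l
    · by_cases h2 : k < j
      · by_cases h3 : l = j
        · rw [if_pos h1, if_pos h2, if_pos h3]
          simpa using hnn (k, l) (k, j)
        · rw [if_pos h1, if_pos h2, if_neg h3, cov_tri h1 h2 h3]
          simp
      · rw [if_neg h2]
        simpa using hnn (k, l) (k, j)
    · rw [if_neg h1]
      simpa using hnn (k, l) (k, j)
  calc (n:ℝ) * ((n:ℝ) - 1) * ((n:ℝ) - 2) / 3 * Vq m p
      = ∑ k : Fin n, ∑ l : Fin n, ∑ j : Fin n,
          (if k < l then (1:ℝ) else 0) * (if k < j then (1:ℝ) else 0)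
            * (if l = j then (0:ℝ) else 1) * Vq m p := by
        rw [Finset.sum_congr rfl fun (k : Fin n) _ => Finset.sum_congr rfl
          fun (l : Fin n) _ => (Finset.sum_mul ..).symm,
          Finset.sum_congr rfl fun (k : Fin n) _ => (Finset.sum_mul ..).symm,
          ← Finset.sum_mul, count3]
    _ ≤ ∑ k : Fin n, ∑ l : Fin n, ∑ j : Fin n, cov n m p (k, l) (k, j) :=
        Finset.sum_le_sum fun k _ => Finset.sum_le_sum fun l _ =>
          Finset.sum_le_sum fun j _ => step2 k l j
    _ ≤ ∑ k : Fin n, ∑ l : Fin n,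
          ∑ f ∈ (Finset.univ ×ˢ Finset.univ : Finset (Fin n × Fin n)), cov n m p (k, l) f :=
        Finset.sum_le_sum fun k _ => Finset.sum_le_sum fun l _ => step1 k l

lemma inner_ii (y : V m) : ∑ x : V m, bw m p x * (gfun m x y - phat m p)^2
    = (1 - 2 * phat m p) * qv m p y + phat m p ^ 2 := by
  have key : ∀ x : V m, bw m p x * (gfun m x y - phat m p)^2
      = (1 - 2 * phat m p) * (bw m p x * gfun m y x) + phat m p ^2 * bw m p x := by
    intro x
    rw [gfun_symm m x y]
    rcases gfun_01 m y x with h | h <;> rw [h] <;> ring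
  rw [Finset.sum_congr rfl fun (x : V m) _ => key x, Finset.sum_add_distrib,
    ← Finset.mul_sum, ← Finset.mul_sum, sum_bw]
  rw [show (∑ x : V m, bw m p x * gfun m y x) = qv m p y from rfl]
  ring

lemma outer_ii : ∑ y : V m, bw m p y * ((1 - 2 * phat m p) * qv m p y + phat m p ^ 2)^2
    = (phat m p * (1 - phat m p))^2 + (1 - 2 * phat m p)^2 * Vq m p := by
  have key : ∀ y : V m, bw m p y * ((1 - 2 * phat m p) * qv m p y + phat m p ^ 2)^2
      = (1 - 2 * phat m p)^2 * (bw m p y * qv m p y ^2)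
        + 2 * (1 - 2 * phat m p) * phat m p ^2 * (bw m p y * qv m p y)
        + phat m p ^4 * bw m p y := by
    intro y; ring
  rw [Finset.sum_congr rfl fun (y : V m) _ => key y, Finset.sum_add_distrib,
    Finset.sum_add_distrib, ← Finset.mul_sum, ← Finset.mul_sum, ← Finset.mul_sum,
    q_int, sum_bw]
  have hQ2 : ∑ u : V m, bw m p u * qv m p u ^ 2 = Vq m p + phat m p ^2 := by
    rw [Vq_expand]; ring
  rw [hQ2]
  ring
end VarBound


/-- analytic estimates for the first two contraction norms
(Lemma 7.1). -/
theorem stmt14 :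
    ∃ C : ℝ, 0 < C ∧
      ∀ (n m : ℕ) (p : ℝ), 3 ≤ n → 3 ≤ m → 0 < p → p < 1 →
        ((n : ℝ) ^ 2 *
            ∑ x : V m, ∑ y : V m, bw m p x * bw m p y *
              (gfun m x y - phat m p) ^ 4 ≤
          C * VarE n m p (NE n m) ^ 2 /
            ((n : ℝ) ^ 2 * phat m p * (1 - phat m p))) ∧
        ((n : ℝ) ^ 3 *
            ∑ y : V m, bw m p y *
              (∑ x : V m, bw m p x * (gfun m x y - phat m p) ^ 2) ^ 2 ≤
          C * VarE n m p (NE n m) ^ 2 *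
            (1 / ((n : ℝ) ^ 2 * phat m p * (1 - phat m p)) + 1 / (n : ℝ))) := by
  refine ⟨81, by norm_num, fun n m p hn hm hp0 hp1 => ?_⟩
  have hp0' : (0:ℝ) ≤ p := le_of_lt hp0
  have hp1' : p ≤ 1 := le_of_lt hp1
  have hq1 : 0 < 1 - p^2 := by nlinarith
  have hq2 : 1 - p^2 < 1 := by nlinarith
  have hm0 : m ≠ 0 := by omega
  have hpow_pos : 0 < (1 - p^2)^m := pow_pos hq1 m
  have hpow_lt : (1 - p^2)^m < 1 := pow_lt_one₀ (le_of_lt hq1) hq2 hm0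
  have ha0 : 0 < phat m p := by unfold phat; linarith
  have ha1 : phat m p < 1 := by unfold phat; linarith
  have hs0 : 0 < phat m p * (1 - phat m p) := mul_pos ha0 (by linarith)
  have hVq0 : 0 ≤ Vq m p := Vq_nonneg hp0' hp1'
  have hn3 : (3:ℝ) ≤ (n:ℝ) := by exact_mod_cast hn
  have hn0 : (0:ℝ) < n := by linarith
  have hv1 : ((n:ℝ)^2 - n)/2 * (phat m p * (1 - phat m p)) ≤ VarE n m p (NE n m) :=
    var_ge_diag hp0' hp1' (le_of_lt ha0) (le_of_lt ha1)
  have hv2 : (n:ℝ) * ((n:ℝ) - 1) * ((n:ℝ) - 2) / 3 * Vq m p ≤ VarE n m p (NE n m) :=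
    var_ge_tri hp0' hp1' (le_of_lt ha0) (le_of_lt ha1)
  have hv1' : (n:ℝ)^2/3 * (phat m p * (1 - phat m p)) ≤ VarE n m p (NE n m) := by
    refine le_trans ?_ hv1
    apply mul_le_mul_of_nonneg_right ?_ (le_of_lt hs0)
    nlinarith
  have hv2' : 2*(n:ℝ)^3/27 * Vq m p ≤ VarE n m p (NE n m) := by
    refine le_trans ?_ hv2
    apply mul_le_mul_of_nonneg_right ?_ hVq0
    nlinarith [mul_nonneg hn0.le (mul_nonneg (sub_nonneg.2 hn3)
      (show (0:ℝ) ≤ 7*(n:ℝ)-6 by linarith))]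
  have hVarPos : 0 < VarE n m p (NE n m) :=
    lt_of_lt_of_le (mul_pos (by positivity) hs0) hv1'
  have hVarSq : ((n:ℝ)^2/3 * (phat m p * (1 - phat m p)))^2 ≤ VarE n m p (NE n m) ^2 := by
    rw [pow_two (VarE n m p (NE n m)), pow_two ((n:ℝ)^2/3 * (phat m p * (1 - phat m p)))]
    exact mul_self_le_mul_self (mul_nonneg (by positivity) hs0.le) hv1'
  have hprod : ((n:ℝ)^2/3 * (phat m p * (1 - phat m p))) * (2*(n:ℝ)^3/27 * Vq m p)
      ≤ VarE n m p (NE n m) ^2 := by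
    rw [pow_two (VarE n m p (NE n m))]
    exact mul_le_mul hv1' hv2' (mul_nonneg (by positivity) hVq0) (le_of_lt hVarPos)
  constructor
  · -- part (i)
    rw [four_val m p, le_div_iff₀
      (mul_pos (mul_pos (by positivity) ha0) (show (0:ℝ) < 1 - phat m p by linarith))]
    have hM4 : phat m p * (1 - phat m p)^4 + phat m p ^4 * (1 - phat m p)
        ≤ phat m p * (1 - phat m p) := by nlinarith
    have aux : 0 ≤ (n:ℝ)^4 * (phat m p * (1 - phat m p)) *
        ((phat m p * (1 - phat m p))
          - (phat m p * (1 - phat m p)^4 + phat m p ^4 * (1 - phat m p))) :=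
      mul_nonneg (mul_nonneg (by positivity) hs0.le) (by linarith)
    nlinarith [hVarSq, aux, sq_nonneg (VarE n m p (NE n m))]
  · -- part (ii)
    have hL : ∑ y : V m, bw m p y * (∑ x : V m, bw m p x * (gfun m x y - phat m p)^2)^2
        = (phat m p * (1 - phat m p))^2 + (1 - 2 * phat m p)^2 * Vq m p := by
      rw [← outer_ii]
      exact Finset.sum_congr rfl fun y _ => by rw [inner_ii y]
    rw [hL]
    have d1 : (n:ℝ)^3 * (phat m p * (1 - phat m p))^2
        ≤ 81 * VarE n m p (NE n m)^2 * (1/(n:ℝ)) := by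
      rw [mul_one_div, le_div_iff₀ hn0]
      nlinarith [hVarSq]
    have d2 : (n:ℝ)^3 * ((1 - 2 * phat m p)^2 * Vq m p)
        ≤ 81 * VarE n m p (NE n m)^2 * (1/((n:ℝ)^2 * phat m p * (1 - phat m p))) := by
      rw [mul_one_div, le_div_iff₀
        (mul_pos (mul_pos (by positivity) ha0) (show (0:ℝ) < 1 - phat m p by linarith))]
      have aux : 0 ≤ (n:ℝ)^5 * (phat m p * (1 - phat m p)) * Vq m p
          * (1 - (1 - 2 * phat m p)^2) :=
        mul_nonneg (mul_nonneg (mul_nonneg (by positivity) hs0.le) hVq0) (by nlinarith)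
      nlinarith [hprod, aux]
    have final : 81 * VarE n m p (NE n m)^2 * (1/((n:ℝ)^2 * phat m p * (1 - phat m p)) + 1/(n:ℝ))
        = 81 * VarE n m p (NE n m)^2 * (1/((n:ℝ)^2 * phat m p * (1 - phat m p)))
          + 81 * VarE n m p (NE n m)^2 * (1/(n:ℝ)) := by ring
    rw [final, mul_add]
    linarith [d1, d2]


end

end RIG
end
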